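/- arXiv:2504.03809 — 9 statements merged into one kernel-verified Lean document; each statement's English description precedes it below -/
import Mathlib

section
/- The positionwise distance POS is a pseudometric on the set of m×m bistochastic matrices: for all m×m bistochastic matrices X, Y, Z it holds that POS(X,X) = 0, POS(X,Y) = POS(Y,X), and POS(X,Z) ≤ POS(X,Y) + POS(Y,Z). -/
open Finset

/-- Earth mover's distance between two vectors in ℝ^m: the ℓ1-distance
between their prefix-sum vectors. -/
noncomputable def emd {m : ℕ} (x y : Fin m → ℝ) : ℝ :=
  ∑ k : Fin m, |(∑ i ∈ Finset.Iic k, x i) - (∑ i ∈ Finset.Iic k, y i)|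

/-- The positionwise distance between two m×m matrices: the minimum over
permutations σ of the sum of EMD distances between matched columns. -/
noncomputable def POS {m : ℕ} (X Y : Matrix (Fin m) (Fin m) ℝ) : ℝ :=
  Finset.univ.inf' Finset.univ_nonempty
    (fun σ : Equiv.Perm (Fin m) => ∑ j : Fin m, emd (fun i => X i j) (fun i => Y i (σ j)))

/-- A matrix is bistochastic (a frequency matrix) if its entries are
nonnegative and every row and every column sums to 1. -/
def Bistochastic {m : ℕ} (X : Matrix (Fin m) (Fin m) ℝ) : Prop :=
  (∀ i j, 0 ≤ X i j) ∧ (∀ i, ∑ j, X i j = 1) ∧ (∀ j, ∑ i, X i j = 1)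

/-- The identity frequency matrix ID_m. -/
noncomputable def IDmat (m : ℕ) : Matrix (Fin m) (Fin m) ℝ :=
  fun i j => if i = j then 1 else 0

/-- The uniformity frequency matrix UN_m. -/
noncomputable def UNmat (m : ℕ) : Matrix (Fin m) (Fin m) ℝ :=
  fun _ _ => 1 / m

/-- The antagonism frequency matrix AN_m = (ID_m + rID_m)/2: entries 1/2 at
positions (i,i) and (i, m+1-i) (1-indexed), i.e. (i,j) with i+j+1 = m in
0-indexed terms. -/
noncomputable def ANmat (m : ℕ) : Matrix (Fin m) (Fin m) ℝ :=
  fun i j => ((if i = j then 1 else 0) + (if (i : ℕ) + (j : ℕ) + 1 = m then 1 else 0)) / 2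

/-- The stratification frequency matrix ST_m: block-diagonal with two
(m/2)×(m/2) blocks of entries 2/m. -/
noncomputable def STmat (m : ℕ) : Matrix (Fin m) (Fin m) ℝ :=
  fun i j => if (((i : ℕ) < m / 2) ↔ ((j : ℕ) < m / 2)) then 2 / m else 0

/-! `emd` is the ℓ¹-distance of prefix-sum vectors, hence a pseudometric. `POS` minimises a
sum of column distances over matchings σ; inverting an optimal matching gives symmetry, and
composing optimal matchings X → Y → Z gives the triangle inequality. -/

section

variable {m : ℕ}

lemma emd_nonneg (x y : Fin m → ℝ) : 0 ≤ emd x y :=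
  sum_nonneg fun _ _ => abs_nonneg _

lemma emd_self (x : Fin m → ℝ) : emd x x = 0 := by
  simp [emd]

lemma emd_comm (x y : Fin m → ℝ) : emd x y = emd y x :=
  sum_congr rfl fun _ _ => abs_sub_comm _ _

lemma emd_triangle (x y z : Fin m → ℝ) : emd x z ≤ emd x y + emd y z := by
  rw [emd, emd, emd, ← sum_add_distrib]
  exact sum_le_sum fun _ _ => abs_sub_le _ _ _

namespace POS

noncomputable def matchingCost (X Y : Matrix (Fin m) (Fin m) ℝ) (σ : Equiv.Perm (Fin m)) : ℝ :=
  ∑ j, emd (fun i => X i j) (fun i => Y i (σ j))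

lemma matchingCost_nonneg (X Y : Matrix (Fin m) (Fin m) ℝ) (σ : Equiv.Perm (Fin m)) :
    0 ≤ matchingCost X Y σ :=
  sum_nonneg fun _ _ => emd_nonneg _ _

lemma matchingCost_self_one (X : Matrix (Fin m) (Fin m) ℝ) : matchingCost X X 1 = 0 := by
  simp [matchingCost, emd_self]

lemma matchingCost_symm (X Y : Matrix (Fin m) (Fin m) ℝ) (σ : Equiv.Perm (Fin m)) :
    matchingCost Y X σ⁻¹ = matchingCost X Y σ :=
  Fintype.sum_equiv σ⁻¹ _ _ fun _ => by
    simp only [Equiv.Perm.inv_def, Equiv.apply_symm_apply, emd_comm]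

lemma matchingCost_trans_le (X Y Z : Matrix (Fin m) (Fin m) ℝ) (σ τ : Equiv.Perm (Fin m)) :
    matchingCost X Z (σ.trans τ) ≤ matchingCost X Y σ + matchingCost Y Z τ := by
  have reindex : matchingCost Y Z τ = ∑ j, emd (fun i => Y i (σ j)) (fun i => Z i (τ (σ j))) :=
    (Fintype.sum_equiv σ _ _ fun _ => rfl).symm
  rw [reindex, matchingCost, matchingCost, ← sum_add_distrib]
  exact sum_le_sum fun _ _ => emd_triangle _ _ _

end POS

open POS

lemma POS_le_matchingCost (X Y : Matrix (Fin m) (Fin m) ℝ) (σ : Equiv.Perm (Fin m)) :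
    POS X Y ≤ matchingCost X Y σ :=
  inf'_le _ (mem_univ σ)

lemma exists_matchingCost_eq_POS (X Y : Matrix (Fin m) (Fin m) ℝ) :
    ∃ σ, matchingCost X Y σ = POS X Y := by
  obtain ⟨σ, -, hσ⟩ := exists_mem_eq_inf' univ_nonempty (matchingCost X Y)
  exact ⟨σ, hσ.symm⟩

lemma POS_self (X : Matrix (Fin m) (Fin m) ℝ) : POS X X = 0 :=
  le_antisymm ((POS_le_matchingCost X X 1).trans_eq (matchingCost_self_one X))
    (le_inf' _ _ fun σ _ => matchingCost_nonneg X X σ)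

lemma POS_le_POS_swap (X Y : Matrix (Fin m) (Fin m) ℝ) : POS X Y ≤ POS Y X :=
  le_inf' _ _ fun σ _ => (POS_le_matchingCost X Y σ⁻¹).trans_eq (matchingCost_symm Y X σ)

lemma POS_comm (X Y : Matrix (Fin m) (Fin m) ℝ) : POS X Y = POS Y X :=
  le_antisymm (POS_le_POS_swap X Y) (POS_le_POS_swap Y X)

lemma POS_triangle (X Y Z : Matrix (Fin m) (Fin m) ℝ) : POS X Z ≤ POS X Y + POS Y Z := by
  obtain ⟨σ, hσ⟩ := exists_matchingCost_eq_POS X Y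
  obtain ⟨τ, hτ⟩ := exists_matchingCost_eq_POS Y Z
  calc POS X Z ≤ matchingCost X Z (σ.trans τ) := POS_le_matchingCost X Z _
    _ ≤ matchingCost X Y σ + matchingCost Y Z τ := matchingCost_trans_le X Y Z σ τ
    _ = POS X Y + POS Y Z := by rw [hσ, hτ]

end

theorem pos_pseudometric_general {m : ℕ} (X Y Z : Matrix (Fin m) (Fin m) ℝ) :
    POS X X = 0 ∧ POS X Y = POS Y X ∧ POS X Z ≤ POS X Y + POS Y Z :=
  ⟨POS_self X, POS_comm X Y, POS_triangle X Y Z⟩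

theorem pos_pseudometric {m : ℕ} (X Y Z : Matrix (Fin m) (Fin m) ℝ)
    (hX : Bistochastic X) (hY : Bistochastic Y) (hZ : Bistochastic Z) :
    POS X X = 0 ∧ POS X Y = POS Y X ∧ POS X Z ≤ POS X Y + POS Y Z :=
  pos_pseudometric_general X Y Z
end

section
/- If m is a positive integer divisible by 4, then POS(ID_m, UN_m) = (m² − 1)/3. -/
open Finset

lemma sumA (n : ℕ) : ∑ k ∈ Finset.range n, ((k : ℝ) + 1) = n * (n + 1) / 2 := by
  induction n with
  | zero => simp
  | succ n ih => rw [Finset.sum_range_succ, ih]; push_cast; ring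

lemma sumB (n : ℕ) : ∑ k ∈ Finset.range n, ((k : ℝ) + 1) ^ 2 = (n : ℝ) * ((n : ℝ) + 1) * (2 * (n : ℝ) + 1) / 6 := by
  induction n with
  | zero => simp
  | succ n ih => rw [Finset.sum_range_succ, ih]; push_cast; ring

theorem pos_ID_UN (m : ℕ) (hm : 0 < m) (h4 : 4 ∣ m) :
    POS (IDmat m) (UNmat m) = ((m : ℝ) ^ 2 - 1) / 3 := by
  have hm' : (0 : ℝ) < m := by exact_mod_cast hm
  set c : ℝ := ∑ j : Fin m, emd (fun i => IDmat m i j) (fun _ => 1 / (m : ℝ)) with hc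
  have hfun : (fun σ : Equiv.Perm (Fin m) =>
      ∑ j : Fin m, emd (fun i => IDmat m i j) (fun i => UNmat m i (σ j))) = fun _ => c := by
    funext σ; rw [hc]; rfl
  have hPOS : POS (IDmat m) (UNmat m) = c := by
    unfold POS; rw [hfun, Finset.inf'_const]
  rw [hPOS]
  -- compute prefix sums
  have h1 : ∀ j k : Fin m, ∑ i ∈ Finset.Iic k, IDmat m i j
      = if j ≤ k then (1 : ℝ) else 0 := by
    intro j k
    simp [IDmat, Finset.sum_ite_eq', Finset.mem_Iic]
  have h2 : ∀ k : Fin m, ∑ _i ∈ Finset.Iic k, (1 / (m : ℝ)) = ((k : ℕ) + 1) / m := by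
    intro k
    rw [Finset.sum_const, Fin.card_Iic]
    push_cast
    ring
  have hemd : ∀ j : Fin m, emd (fun i => IDmat m i j) (fun _ => 1 / (m : ℝ))
      = ∑ k : Fin m, |(if j ≤ k then (1 : ℝ) else 0) - ((k : ℕ) + 1) / m| := by
    intro j
    unfold emd
    refine Finset.sum_congr rfl fun k _ => ?_
    rw [h1, h2]
  rw [hc]
  calc (∑ j : Fin m, emd (fun i => IDmat m i j) (fun _ => 1 / (m : ℝ)))
      = ∑ j : Fin m, ∑ k : Fin m, |(if j ≤ k then (1 : ℝ) else 0) - ((k : ℕ) + 1) / m| := by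
        exact Finset.sum_congr rfl fun j _ => hemd j
    _ = ∑ k : Fin m, ∑ j : Fin m, |(if j ≤ k then (1 : ℝ) else 0) - ((k : ℕ) + 1) / m| :=
        Finset.sum_comm
    _ = ∑ k : Fin m, (2 / (m : ℝ)) * ((m : ℝ) * ((k : ℕ) + 1) - ((k : ℕ) + 1) ^ 2) := by
        refine Finset.sum_congr rfl fun k _ => ?_
        have hkm : ((k : ℕ) : ℝ) + 1 ≤ m := by
          exact_mod_cast Nat.succ_le_of_lt k.isLt
        have hck0 : (0 : ℝ) ≤ ((k : ℕ) + 1) / m := by positivity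
        have hck1 : ((k : ℕ) + 1 : ℝ) / m ≤ 1 := by
          rw [div_le_one hm']; exact hkm
        rw [← Finset.sum_add_sum_compl (Finset.Iic k)]
        have e1 : ∀ j ∈ Finset.Iic k,
            |(if j ≤ k then (1 : ℝ) else 0) - ((k : ℕ) + 1) / m| = 1 - ((k : ℕ) + 1) / m := by
          intro j hj
          rw [Finset.mem_Iic] at hj
          rw [if_pos hj, abs_of_nonneg (by linarith)]
        have e2 : ∀ j ∈ (Finset.Iic k)ᶜ,
            |(if j ≤ k then (1 : ℝ) else 0) - ((k : ℕ) + 1) / m| = ((k : ℕ) + 1) / m := by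
          intro j hj
          rw [Finset.mem_compl, Finset.mem_Iic] at hj
          rw [if_neg hj, abs_of_nonpos (by linarith)]
          ring
        rw [Finset.sum_congr rfl e1, Finset.sum_congr rfl e2, Finset.sum_const,
          Finset.sum_const, Finset.card_compl, Fin.card_Iic, Fintype.card_fin]
        have hk1 : (k : ℕ) + 1 ≤ m := Nat.succ_le_of_lt k.isLt
        rw [nsmul_eq_mul, nsmul_eq_mul, Nat.cast_sub hk1]
        push_cast
        field_simp
        ring
    _ = ∑ k ∈ Finset.range m, (2 / (m : ℝ)) * ((m : ℝ) * ((k : ℕ) + 1) - ((k : ℕ) + 1) ^ 2) :=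
        Fin.sum_univ_eq_sum_range
          (fun k : ℕ => (2 / (m : ℝ)) * ((m : ℝ) * ((k : ℝ) + 1) - ((k : ℝ) + 1) ^ 2)) m
    _ = ((m : ℝ) ^ 2 - 1) / 3 := by
        rw [← Finset.mul_sum]
        have : ∑ k ∈ Finset.range m, ((m : ℝ) * ((k : ℕ) + 1) - ((k : ℕ) + 1) ^ 2)
            = (m : ℝ) * (∑ k ∈ Finset.range m, ((k : ℝ) + 1))
              - ∑ k ∈ Finset.range m, ((k : ℝ) + 1) ^ 2 := by
          rw [Finset.mul_sum, ← Finset.sum_sub_distrib]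
        rw [this, sumA, sumB]
        field_simp
        ring
end

section
/- If m is a positive integer divisible by 4, then POS(UN_m, ST_m) = m²/4. -/
open Finset

lemma iic_to_range (m : ℕ) (k : Fin m) (f : Fin m → ℝ) (g : ℕ → ℝ)
    (hfg : ∀ i : Fin m, f i = g (i : ℕ)) :
    ∑ i ∈ Finset.Iic k, f i = ∑ i ∈ Finset.range ((k:ℕ)+1), g i := by
  rw [Finset.sum_congr rfl (fun i _ => hfg i)]
  have : Finset.range ((k:ℕ)+1) = Finset.Iic (k:ℕ) := by ext x; simp [Nat.lt_succ_iff]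
  rw [this, ← Fin.map_valEmbedding_Iic, Finset.sum_map]
  rfl

lemma sum_ite_lt (n h : ℕ) (c : ℝ) :
    ∑ i ∈ Finset.range n, (if i < h then c else 0) = c * min n h := by
  rw [Finset.sum_ite, Finset.sum_const, Finset.sum_const_zero]
  have : (Finset.range n).filter (fun i => i < h) = Finset.range (min n h) := by
    ext x; simp only [Finset.mem_filter, Finset.mem_range]; omega
  rw [this]; simp [mul_comm]

lemma sum_ite_not_lt (n h : ℕ) (c : ℝ) :
    ∑ i ∈ Finset.range n, (if i < h then 0 else c) = c * (n - min n h : ℕ) := by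
  rw [Finset.sum_ite, Finset.sum_const_zero, Finset.sum_const]
  have : (Finset.range n).filter (fun i => ¬ i < h) = Finset.Ico (min n h) n := by
    ext x; simp only [Finset.mem_filter, Finset.mem_range, Finset.mem_Ico, not_lt]; omega
  rw [this, Nat.card_Ico]
  simp [mul_comm]

lemma nat_sum (h : ℕ) :
    ∑ k ∈ Finset.range (2*h), (if k < h then k+1 else 2*h-1-k) = h^2 := by
  have T2 : (∑ i ∈ Finset.range h, i) * 2 = h * (h-1) := Finset.sum_range_id_mul_two h
  rw [show 2*h = h + h from by omega, Finset.sum_range_add]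
  have A : ∑ i ∈ Finset.range h, (if i < h then i+1 else h+h-1-i)
      = (∑ i ∈ Finset.range h, i) + h := by
    rw [Finset.sum_congr rfl (fun i hi => if_pos (Finset.mem_range.mp hi))]
    rw [Finset.sum_add_distrib, Finset.sum_const, smul_eq_mul, mul_one, Finset.card_range]
  have B : ∑ i ∈ Finset.range h, (if h + i < h then h+i+1 else h+h-1-(h+i))
      = ∑ i ∈ Finset.range h, i := by
    rw [Finset.sum_congr rfl (fun i hi => if_neg (by omega))]
    have := Finset.sum_range_reflect (fun i => i) h
    rw [← this]
    exact Finset.sum_congr rfl (fun i hi => by simp at hi; omega)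
  rw [A, B]
  rcases Nat.eq_zero_or_pos h with rfl | hp
  · simp
  · obtain ⟨n, rfl⟩ : ∃ n, h = n + 1 := ⟨h - 1, by omega⟩
    simp only [Nat.add_sub_cancel] at T2
    nlinarith [T2]

lemma emd_col (m h : ℕ) (hh : 0 < h) (hm : m = 2 * h) (j j' : Fin m) :
    emd (fun i => UNmat m i j) (fun i => STmat m i j') = (m : ℝ) / 4 := by
  have hm2 : m / 2 = h := by omega
  have hm0 : (0:ℝ) < m := by exact_mod_cast Nat.pos_of_ne_zero (by omega)
  have key : ∀ k : Fin m,
      |(∑ i ∈ Finset.Iic k, UNmat m i j) - (∑ i ∈ Finset.Iic k, STmat m i j')|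
        = ((if (k:ℕ) < h then (k:ℕ)+1 else 2*h-1-(k:ℕ) : ℕ) : ℝ) / m := by
    intro k
    have hkm : (k:ℕ) < m := k.2
    have hA : (∑ i ∈ Finset.Iic k, UNmat m i j) = ((k:ℕ)+1 : ℝ) / m := by
      rw [iic_to_range m k (fun i => UNmat m i j) (fun _ => (1:ℝ)/m) (fun i => rfl),
        Finset.sum_const, Finset.card_range, nsmul_eq_mul]
      push_cast; ring
    by_cases hj : (j' : ℕ) < h
    · have hB : (∑ i ∈ Finset.Iic k, STmat m i j')
          = (2/m) * (min ((k:ℕ)+1) h : ℕ) := by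
        rw [iic_to_range m k (fun i => STmat m i j') (fun t => if t < h then (2:ℝ)/m else 0)
          (fun i => by by_cases hi : (i:ℕ) < h <;> simp [STmat, hm2, hj, hi])]
        exact sum_ite_lt _ _ _
      rw [hA, hB]
      by_cases hk : (k:ℕ) < h
      · rw [if_pos hk, min_eq_left (by omega)]
        have e : ((k:ℕ)+1 : ℝ)/m - 2/m * (((k:ℕ)+1 : ℕ):ℝ)
            = -((((k:ℕ)+1 : ℕ):ℝ)/m) := by push_cast; ring
        rw [e, abs_neg, abs_of_nonneg (by positivity)]
      · rw [if_neg hk, min_eq_right (by omega)]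
        have hcast : ((2*h-1-(k:ℕ) : ℕ) : ℝ) = 2*h - ((k:ℕ)+1) := by
          have : (2*h-1-(k:ℕ) : ℕ) = 2*h - ((k:ℕ)+1) := by omega
          rw [this, Nat.cast_sub (by omega)]; push_cast; ring
        rw [hcast]
        have e : ((k:ℕ)+1 : ℝ)/m - 2/m * ((h:ℕ):ℝ)
            = -((2*h - ((k:ℕ)+1))/m) := by push_cast; ring
        have hle : ((k:ℕ):ℝ)+1 ≤ 2*h := by exact_mod_cast (by omega : (k:ℕ)+1 ≤ 2*h)
        rw [e, abs_neg, abs_of_nonneg (by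
          have h2 : (0:ℝ) ≤ 2*(h:ℝ) - ((k:ℕ)+1) := by linarith
          positivity)]
    · have hB : (∑ i ∈ Finset.Iic k, STmat m i j')
          = (2/m) * ((((k:ℕ)+1) - min ((k:ℕ)+1) h : ℕ):ℝ) := by
        rw [iic_to_range m k (fun i => STmat m i j') (fun t => if t < h then 0 else (2:ℝ)/m)
          (fun i => by by_cases hi : (i:ℕ) < h <;> simp [STmat, hm2, hj, hi])]
        exact sum_ite_not_lt _ _ _
      rw [hA, hB]
      by_cases hk : (k:ℕ) < h
      · rw [if_pos hk, min_eq_left (by omega), Nat.sub_self]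
        push_cast
        rw [mul_zero, sub_zero, abs_of_nonneg (by positivity)]
      · rw [if_neg hk, min_eq_right (by omega)]
        have hcast : ((2*h-1-(k:ℕ) : ℕ) : ℝ) = 2*h - ((k:ℕ)+1) := by
          have : (2*h-1-(k:ℕ) : ℕ) = 2*h - ((k:ℕ)+1) := by omega
          rw [this, Nat.cast_sub (by omega)]; push_cast; ring
        have hcast2 : ((((k:ℕ)+1) - h : ℕ) : ℝ) = ((k:ℕ)+1) - h := by
          rw [Nat.cast_sub (by omega)]; push_cast; ring
        rw [hcast, hcast2]
        have e : ((k:ℕ)+1 : ℝ)/m - 2/m * (((k:ℕ)+1) - h)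
            = (2*h - ((k:ℕ)+1))/m := by field_simp; ring
        rw [e, abs_of_nonneg]
        have : ((k:ℕ):ℝ)+1 ≤ 2*h := by exact_mod_cast (by omega : (k:ℕ)+1 ≤ 2*h)
        have h2 : (0:ℝ) ≤ 2*(h:ℝ) - ((k:ℕ)+1) := by linarith
        positivity
  unfold emd
  rw [Finset.sum_congr rfl (fun k _ => key k)]
  rw [Fin.sum_univ_eq_sum_range (fun t => ((if t < h then t+1 else 2*h-1-t : ℕ) : ℝ) / m) m]
  rw [← Finset.sum_div, ← Nat.cast_sum, hm, nat_sum h]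
  have hh0 : (h:ℝ) ≠ 0 := Nat.cast_ne_zero.mpr (by omega)
  push_cast
  field_simp
  ring

theorem pos_UN_ST (m : ℕ) (hm : 0 < m) (h4 : 4 ∣ m) :
    POS (UNmat m) (STmat m) = (m : ℝ) ^ 2 / 4 := by
  obtain ⟨q, rfl⟩ := h4
  set h : ℕ := 2 * q with hhq
  have hh : 0 < h := by omega
  have hm' : 4 * q = 2 * h := by omega
  have hcol : ∀ σ : Equiv.Perm (Fin (4*q)),
      (∑ j : Fin (4*q), emd (fun i => UNmat (4*q) i j) (fun i => STmat (4*q) i (σ j)))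
        = ((4*q : ℕ) : ℝ) ^ 2 / 4 := by
    intro σ
    rw [Finset.sum_congr rfl (fun j _ => emd_col (4*q) h hh hm' j (σ j))]
    rw [Finset.sum_const, Finset.card_univ, Fintype.card_fin, nsmul_eq_mul]
    ring
  unfold POS
  apply le_antisymm
  · exact (Finset.inf'_le _ (Finset.mem_univ 1)).trans_eq (hcol 1)
  · exact Finset.le_inf' _ _ (fun σ _ => (hcol σ).ge)
end

section
/- If m is a positive integer divisible by 4, then POS(ID_m, ST_m) = (2/3)·(m²/4 − 1). -/
open Finset

noncomputable def gfun (n b : ℕ) : ℝ :=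
  ((b:ℝ)*(b+1) + ((n:ℝ)-b)*((n:ℝ)-b-1)) / (2*n)

lemma gauss (N : ℕ) : ∑ k ∈ range N, ((k:ℝ)+1) = N*(N+1)/2 := by
  induction N with
  | zero => simp
  | succ N ih => rw [Finset.sum_range_succ, ih]; push_cast; ring

lemma sum_Iic_coe {M : ℕ} (k : Fin M) (G : ℕ → ℝ) :
    ∑ i ∈ Finset.Iic k, G (i:ℕ) = ∑ i ∈ Finset.range ((k:ℕ)+1), G i := by
  have h1 : Finset.Iic k = Finset.univ.filter (fun i : Fin M => (i:ℕ) ≤ (k:ℕ)) := by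
    ext i; simp only [Finset.mem_Iic, Finset.mem_filter, Finset.mem_univ, true_and, Fin.le_def]
  rw [h1, Finset.sum_filter]
  rw [Fin.sum_univ_eq_sum_range (fun i => if i ≤ (k:ℕ) then G i else 0)]
  rw [← Finset.sum_filter]
  congr 1
  ext a
  simp only [Finset.mem_filter, Finset.mem_range]
  omega

lemma S1_eq (n j : ℕ) (hn : 0 < n) (hj : j < n) :
    ∑ k ∈ range n, |(if j ≤ k then (1:ℝ) else 0) - ((k:ℝ)+1)/n| = gfun n j := by
  have hnR : (0:ℝ) < n := by exact_mod_cast hn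
  rw [Finset.range_eq_Ico, ← Finset.sum_Ico_consecutive _ (Nat.zero_le j) hj.le]
  have h1 : ∑ k ∈ Finset.Ico 0 j, |(if j ≤ k then (1:ℝ) else 0) - ((k:ℝ)+1)/n|
      = ∑ k ∈ Finset.range j, ((k:ℝ)+1)/n := by
    rw [← Finset.range_eq_Ico]
    apply Finset.sum_congr rfl
    intro k hk
    rw [Finset.mem_range] at hk
    rw [if_neg (by omega)]
    rw [zero_sub, abs_neg, abs_of_nonneg (by positivity)]
  have h2 : ∑ k ∈ Finset.Ico j n, |(if j ≤ k then (1:ℝ) else 0) - ((k:ℝ)+1)/n|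
      = ∑ t ∈ Finset.range (n - j), ((n:ℝ) - (j + t + 1))/n := by
    rw [Finset.sum_Ico_eq_sum_range]
    apply Finset.sum_congr rfl
    intro t ht
    rw [Finset.mem_range] at ht
    rw [if_pos (by omega)]
    have hle : ((j:ℝ) + t) + 1 ≤ n := by exact_mod_cast (by omega : j + t + 1 ≤ n)
    rw [abs_of_nonneg]
    · push_cast; field_simp
    · rw [sub_nonneg, div_le_one hnR]; push_cast; linarith
  rw [h1, h2]
  have g1 : ∑ k ∈ Finset.range j, ((k:ℝ)+1)/n = (j*(j+1)/2)/n := by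
    rw [← Finset.sum_div, gauss]
  have g2 : ∑ t ∈ Finset.range (n - j), ((n:ℝ) - (j + t + 1))/n
      = ((n-j)*((n-j)-1)/2)/n := by
    have hcast : ((n - j : ℕ):ℝ) = (n:ℝ) - j := by
      push_cast [Nat.cast_sub hj.le]; ring
    have : ∀ t ∈ Finset.range (n - j), ((n:ℝ) - (j + t + 1))/n
        = (((n-j:ℕ):ℝ) - (t+1))/n := by
      intro t ht; rw [hcast]; ring_nf
    rw [Finset.sum_congr rfl this]
    rw [← Finset.sum_div]
    rw [Finset.sum_sub_distrib, gauss, Finset.sum_const, Finset.card_range, nsmul_eq_mul]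
    rw [hcast]; ring_nf
  rw [g1, g2, gfun]
  field_simp

lemma S3_eq (n : ℕ) (hn : 0 < n) :
    ∑ k ∈ range n, |(1:ℝ) - ((k:ℝ)+1)/n| = ((n:ℝ)-1)/2 := by
  have hnR : (0:ℝ) < n := by exact_mod_cast hn
  have : ∀ k ∈ range n, |(1:ℝ) - ((k:ℝ)+1)/n| = 1 - ((k:ℝ)+1)/n := by
    intro k hk
    rw [Finset.mem_range] at hk
    rw [abs_of_nonneg]
    rw [sub_nonneg, div_le_one hnR]
    exact_mod_cast hk
  rw [Finset.sum_congr rfl this, Finset.sum_sub_distrib, ← Finset.sum_div, gauss,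
    Finset.sum_const, Finset.card_range, nsmul_eq_mul]
  field_simp
  ring

lemma S4_eq (n : ℕ) (hn : 0 < n) :
    ∑ k ∈ range n, ((k:ℝ)+1)/n = ((n:ℝ)+1)/2 := by
  have hnR : (0:ℝ) < n := by exact_mod_cast hn
  rw [← Finset.sum_div, gauss]
  field_simp

lemma S2_eq (n j : ℕ) (hj : j ≤ n) :
    ∑ k ∈ range n, (if j ≤ k then (1:ℝ) else 0) = (n:ℝ) - j := by
  rw [← Finset.sum_filter]
  have : (range n).filter (fun k => j ≤ k) = Finset.Ico j n := by
    ext a; simp only [Finset.mem_filter, Finset.mem_range, Finset.mem_Ico]; omega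
  rw [this]
  simp [Nat.cast_sub hj]

lemma S5_eq (n b : ℕ) (hb : b ≤ n) :
    ∑ t ∈ range n, (if t < b then (1:ℝ) else 0) = (b:ℝ) := by
  rw [← Finset.sum_filter]
  have : (range n).filter (fun t => t < b) = Finset.range b := by
    ext a; simp only [Finset.mem_filter, Finset.mem_range]; omega
  rw [this]
  simp

lemma S6_eq (N n : ℕ) (r : ℝ) :
    ∑ i ∈ range N, (if i < n then r else 0) = (min N n : ℕ) * r := by
  rw [← Finset.sum_filter]
  have : (range N).filter (fun i => i < n) = Finset.range (min N n) := by
    ext a; simp only [Finset.mem_filter, Finset.mem_range]; omega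
  rw [this]
  simp [mul_comm]

lemma sumq (N : ℕ) : ∑ b ∈ range N, (b:ℝ)*((b:ℝ)+1) = ((N:ℝ)-1)*N*(N+1)/3 := by
  induction N with
  | zero => simp
  | succ N ih => rw [Finset.sum_range_succ, ih]; push_cast; ring

lemma sumq2 (n : ℕ) : ∑ b ∈ range n, ((n:ℝ)-b)*((n:ℝ)-b-1) = ((n:ℝ)-1)*n*(n+1)/3 := by
  rw [← sumq n]
  apply Finset.sum_nbij' (fun b => n - 1 - b) (fun b => n - 1 - b)
  · intro a ha; rw [Finset.mem_range] at *; omega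
  · intro a ha; rw [Finset.mem_range] at *; omega
  · intro a ha; rw [Finset.mem_range] at ha; omega
  · intro a ha; rw [Finset.mem_range] at ha; omega
  · intro a ha
    rw [Finset.mem_range] at ha
    have h1 : ((n - 1 - a : ℕ):ℝ) = (n:ℝ) - 1 - a := by
      push_cast [Nat.cast_sub (by omega : 1 + a ≤ n), Nat.sub_sub]; ring
    rw [h1]; ring

lemma sum_gfun (n : ℕ) (hn : 0 < n) :
    ∑ b ∈ range n, gfun n b = ((n:ℝ)^2 - 1)/3 := by
  unfold gfun
  rw [← Finset.sum_div, Finset.sum_add_distrib, sumq, sumq2]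
  have hnR : (0:ℝ) < n := by exact_mod_cast hn
  field_simp
  ring

lemma S7_eq (N n : ℕ) (r : ℝ) :
    ∑ i ∈ range N, (if n ≤ i then r else 0) = ((N - n : ℕ):ℝ) * r := by
  rw [← Finset.sum_filter]
  have : (range N).filter (fun i => n ≤ i) = Finset.Ico n N := by
    ext a; simp only [Finset.mem_filter, Finset.mem_range, Finset.mem_Ico]; omega
  rw [this]
  simp [Nat.card_Ico, mul_comm]

lemma hID_prefix (n : ℕ) (j k : Fin (2*n)) :
    (∑ i ∈ Finset.Iic k, IDmat (2*n) i j) = if (j:ℕ) ≤ (k:ℕ) then (1:ℝ) else 0 := by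
  have h : ∀ i ∈ Finset.Iic k, IDmat (2*n) i j
      = (fun i' : ℕ => if i' = (j:ℕ) then (1:ℝ) else 0) (i:ℕ) := by
    intro i _; simp [IDmat, Fin.ext_iff]
  rw [Finset.sum_congr rfl h, sum_Iic_coe k (fun i' : ℕ => if i' = (j:ℕ) then (1:ℝ) else 0)]
  rw [Finset.sum_ite_eq' (range ((k:ℕ)+1)) (j:ℕ) (fun _ => (1:ℝ))]
  simp [Nat.lt_succ_iff]

lemma hST_prefix_lt (n : ℕ) (c k : Fin (2*n)) (hc : (c:ℕ) < n) :
    (∑ i ∈ Finset.Iic k, STmat (2*n) i c)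
      = ((min ((k:ℕ)+1) n : ℕ):ℝ) * (2/((2*n:ℕ):ℝ)) := by
  have hdiv : 2*n/2 = n := by omega
  have h : ∀ i ∈ Finset.Iic k, STmat (2*n) i c
      = (fun i' : ℕ => if i' < n then (2/((2*n:ℕ):ℝ)) else 0) (i:ℕ) := by
    intro i _
    simp only [STmat, hdiv]
    by_cases hi : (i:ℕ) < n <;> simp [hi, hc]
  rw [Finset.sum_congr rfl h,
    sum_Iic_coe k (fun i' : ℕ => if i' < n then (2/((2*n:ℕ):ℝ)) else 0), S6_eq]

lemma hST_prefix_ge (n : ℕ) (c k : Fin (2*n)) (hc : ¬ (c:ℕ) < n) :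
    (∑ i ∈ Finset.Iic k, STmat (2*n) i c)
      = (((k:ℕ)+1 - n : ℕ):ℝ) * (2/((2*n:ℕ):ℝ)) := by
  have hdiv : 2*n/2 = n := by omega
  have h : ∀ i ∈ Finset.Iic k, STmat (2*n) i c
      = (fun i' : ℕ => if n ≤ i' then (2/((2*n:ℕ):ℝ)) else 0) (i:ℕ) := by
    intro i _
    simp only [STmat, hdiv]
    by_cases hi : (i:ℕ) < n
    · simp [hi, hc, Nat.not_le.mpr hi]
    · simp [hi, hc, Nat.not_lt.mp hi]
  rw [Finset.sum_congr rfl h,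
    sum_Iic_coe k (fun i' : ℕ => if n ≤ i' then (2/((2*n:ℕ):ℝ)) else 0), S7_eq]

lemma sum_split (n : ℕ) (F : ℕ → ℝ) :
    ∑ k ∈ range (2*n), F k = ∑ k ∈ range n, F k + ∑ t ∈ range n, F (n + t) := by
  rw [two_mul]
  exact Finset.sum_range_add F n n

lemma emd_cases (n : ℕ) (hn : 0 < n) (j c : Fin (2*n)) :
    emd (fun i => IDmat (2*n) i j) (fun i => STmat (2*n) i c) =
      if (j:ℕ) < n then
        (if (c:ℕ) < n then gfun n (j:ℕ) else ((n:ℝ) - ((j:ℕ):ℝ)) + ((n:ℝ)-1)/2)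
      else
        (if (c:ℕ) < n then (((j:ℕ):ℝ) - (n:ℝ)) + ((n:ℝ)+1)/2 else gfun n ((j:ℕ) - n)) := by
  have hnR : (0:ℝ) < n := by exact_mod_cast hn
  have hm : ((2*n:ℕ):ℝ) = 2*(n:ℝ) := by push_cast; ring
  have hj2 : (j:ℕ) < 2*n := j.isLt
  unfold emd
  by_cases hc : (c:ℕ) < n
  · -- c in first block
    have hterm : ∀ k : Fin (2*n),
        |(∑ i ∈ Finset.Iic k, IDmat (2*n) i j) - (∑ i ∈ Finset.Iic k, STmat (2*n) i c)|
        = (fun K : ℕ => |(if (j:ℕ) ≤ K then (1:ℝ) else 0)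
            - ((min (K+1) n:ℕ):ℝ) * (2/((2*n:ℕ):ℝ))|) (k:ℕ) := by
      intro k; rw [hID_prefix, hST_prefix_lt n c k hc]
    rw [Finset.sum_congr rfl (fun k _ => hterm k),
      Fin.sum_univ_eq_sum_range (fun K : ℕ => |(if (j:ℕ) ≤ K then (1:ℝ) else 0)
            - ((min (K+1) n:ℕ):ℝ) * (2/((2*n:ℕ):ℝ))|), sum_split]
    have e1 : ∑ k ∈ range n, (fun K : ℕ => |(if (j:ℕ) ≤ K then (1:ℝ) else 0)
            - ((min (K+1) n:ℕ):ℝ) * (2/((2*n:ℕ):ℝ))|) k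
        = ∑ k ∈ range n, |(if (j:ℕ) ≤ k then (1:ℝ) else 0) - ((k:ℝ)+1)/(n:ℝ)| := by
      apply Finset.sum_congr rfl
      intro k hk
      rw [Finset.mem_range] at hk
      have : min (k+1) n = k+1 := by omega
      simp only [this, hm]
      congr 1
      push_cast
      split_ifs <;> field_simp <;> ring
    have e2 : ∑ t ∈ range n, (fun K : ℕ => |(if (j:ℕ) ≤ K then (1:ℝ) else 0)
            - ((min (K+1) n:ℕ):ℝ) * (2/((2*n:ℕ):ℝ))|) (n + t)
        = ∑ t ∈ range n, |(if (j:ℕ) ≤ n + t then (1:ℝ) else 0) - 1| := by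
      apply Finset.sum_congr rfl
      intro t ht
      have : min (n+t+1) n = n := by omega
      simp only [this, hm]
      congr 1
      split_ifs <;> field_simp <;> ring
    rw [e1, e2]
    by_cases hj : (j:ℕ) < n
    · rw [if_pos hj, if_pos hc]
      have e3 : ∑ t ∈ range n, |(if (j:ℕ) ≤ n + t then (1:ℝ) else 0) - 1| = 0 := by
        apply Finset.sum_eq_zero
        intro t ht
        rw [if_pos (by omega)]
        simp
      rw [e3, S1_eq n (j:ℕ) hn hj, add_zero]
    · rw [if_neg hj, if_pos hc]
      have e3 : ∑ k ∈ range n, |(if (j:ℕ) ≤ k then (1:ℝ) else 0) - ((k:ℝ)+1)/(n:ℝ)|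
          = ∑ k ∈ range n, ((k:ℝ)+1)/(n:ℝ) := by
        apply Finset.sum_congr rfl
        intro k hk
        rw [Finset.mem_range] at hk
        rw [if_neg (by omega), zero_sub, abs_neg, abs_of_nonneg (by positivity)]
      have e4 : ∑ t ∈ range n, |(if (j:ℕ) ≤ n + t then (1:ℝ) else 0) - 1|
          = ∑ t ∈ range n, (if t < (j:ℕ) - n then (1:ℝ) else 0) := by
        apply Finset.sum_congr rfl
        intro t ht
        by_cases h : (j:ℕ) ≤ n + t
        · rw [if_pos h, if_neg (by omega)]; simp
        · rw [if_neg h, if_pos (by omega)]; simp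
      rw [e3, e4, S4_eq n hn, S5_eq n ((j:ℕ) - n) (by omega)]
      rw [Nat.cast_sub (by omega)]
      ring
  · -- c in second block
    have hterm : ∀ k : Fin (2*n),
        |(∑ i ∈ Finset.Iic k, IDmat (2*n) i j) - (∑ i ∈ Finset.Iic k, STmat (2*n) i c)|
        = (fun K : ℕ => |(if (j:ℕ) ≤ K then (1:ℝ) else 0)
            - ((K+1-n:ℕ):ℝ) * (2/((2*n:ℕ):ℝ))|) (k:ℕ) := by
      intro k; rw [hID_prefix, hST_prefix_ge n c k hc]
    rw [Finset.sum_congr rfl (fun k _ => hterm k),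
      Fin.sum_univ_eq_sum_range (fun K : ℕ => |(if (j:ℕ) ≤ K then (1:ℝ) else 0)
            - ((K+1-n:ℕ):ℝ) * (2/((2*n:ℕ):ℝ))|), sum_split]
    have e1 : ∑ k ∈ range n, (fun K : ℕ => |(if (j:ℕ) ≤ K then (1:ℝ) else 0)
            - ((K+1-n:ℕ):ℝ) * (2/((2*n:ℕ):ℝ))|) k
        = ∑ k ∈ range n, |(if (j:ℕ) ≤ k then (1:ℝ) else 0)| := by
      apply Finset.sum_congr rfl
      intro k hk
      rw [Finset.mem_range] at hk
      have : k+1-n = 0 := by omega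
      simp only [this]
      simp
    have e2 : ∑ t ∈ range n, (fun K : ℕ => |(if (j:ℕ) ≤ K then (1:ℝ) else 0)
            - ((K+1-n:ℕ):ℝ) * (2/((2*n:ℕ):ℝ))|) (n + t)
        = ∑ t ∈ range n, |(if (j:ℕ) ≤ n + t then (1:ℝ) else 0) - ((t:ℝ)+1)/(n:ℝ)| := by
      apply Finset.sum_congr rfl
      intro t ht
      have : n+t+1-n = t+1 := by omega
      simp only [this, hm]
      congr 1
      push_cast
      split_ifs <;> field_simp <;> ring
    rw [e1, e2]
    by_cases hj : (j:ℕ) < n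
    · rw [if_pos hj, if_neg hc]
      have e3 : ∑ k ∈ range n, |(if (j:ℕ) ≤ k then (1:ℝ) else 0)|
          = ∑ k ∈ range n, (if (j:ℕ) ≤ k then (1:ℝ) else 0) := by
        apply Finset.sum_congr rfl
        intro k hk
        rw [abs_of_nonneg (by positivity)]
      have e4 : ∑ t ∈ range n, |(if (j:ℕ) ≤ n + t then (1:ℝ) else 0) - ((t:ℝ)+1)/(n:ℝ)|
          = ∑ t ∈ range n, |(1:ℝ) - ((t:ℝ)+1)/(n:ℝ)| := by
        apply Finset.sum_congr rfl
        intro t ht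
        rw [if_pos (by omega)]
      rw [e3, e4, S2_eq n (j:ℕ) hj.le, S3_eq n hn]
    · rw [if_neg hj, if_neg hc]
      have e3 : ∑ k ∈ range n, |(if (j:ℕ) ≤ k then (1:ℝ) else 0)| = 0 := by
        apply Finset.sum_eq_zero
        intro k hk
        rw [Finset.mem_range] at hk
        rw [if_neg (by omega)]
        simp
      have e4 : ∑ t ∈ range n, |(if (j:ℕ) ≤ n + t then (1:ℝ) else 0) - ((t:ℝ)+1)/(n:ℝ)|
          = ∑ t ∈ range n, |(if (j:ℕ)-n ≤ t then (1:ℝ) else 0) - ((t:ℝ)+1)/(n:ℝ)| := by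
        apply Finset.sum_congr rfl
        intro t ht
        congr 1
        by_cases h : (j:ℕ) ≤ n + t
        · rw [if_pos h, if_pos (by omega)]
        · rw [if_neg h, if_neg (by omega)]
      rw [e3, e4, S1_eq n ((j:ℕ)-n) hn (by omega), zero_add]

lemma gfun_le (n b : ℕ) (hn : 0 < n) (hb : b < n) : gfun n b ≤ ((n:ℝ)-1)/2 := by
  have hnR : (0:ℝ) < n := by exact_mod_cast hn
  have hbR : (b:ℝ) + 1 ≤ n := by exact_mod_cast hb
  have hb0 : (0:ℝ) ≤ b := Nat.cast_nonneg b
  unfold gfun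
  rw [div_le_div_iff₀ (by positivity) (by norm_num)]
  nlinarith [mul_nonneg hb0 (by linarith : (0:ℝ) ≤ (n:ℝ) - ((b:ℝ)+1))]

noncomputable def Gf (n j : ℕ) : ℝ := if j < n then gfun n j else gfun n (j - n)

lemma emd_ge (n : ℕ) (hn : 0 < n) (j c : Fin (2*n)) :
    Gf n (j:ℕ) ≤ emd (fun i => IDmat (2*n) i j) (fun i => STmat (2*n) i c) := by
  rw [emd_cases n hn j c]
  have hj2 : (j:ℕ) < 2*n := j.isLt
  unfold Gf
  by_cases hj : (j:ℕ) < n <;> by_cases hc : (c:ℕ) < n <;>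
    simp only [hj, hc, if_pos, if_neg, if_true, if_false]
  · exact le_refl _
  · have h1 := gfun_le n (j:ℕ) hn hj
    have h2 : ((j:ℕ):ℝ) + 1 ≤ n := by exact_mod_cast hj
    linarith
  · have h1 := gfun_le n ((j:ℕ) - n) hn (by omega)
    have h2 : (n:ℝ) ≤ ((j:ℕ):ℝ) := by exact_mod_cast Nat.not_lt.mp hj
    linarith
  · exact le_refl _

lemma emd_id (n : ℕ) (hn : 0 < n) (j : Fin (2*n)) :
    emd (fun i => IDmat (2*n) i j) (fun i => STmat (2*n) i j) = Gf n (j:ℕ) := by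
  rw [emd_cases n hn j j]
  unfold Gf
  by_cases hj : (j:ℕ) < n <;> simp [hj]

lemma sum_G (n : ℕ) (hn : 0 < n) :
    ∑ j ∈ range (2*n), Gf n j = 2*((n:ℝ)^2-1)/3 := by
  rw [sum_split]
  have e1 : ∑ j ∈ range n, Gf n j = ∑ j ∈ range n, gfun n j := by
    apply Finset.sum_congr rfl
    intro j hj
    rw [Finset.mem_range] at hj
    rw [Gf, if_pos hj]
  have e2 : ∑ t ∈ range n, Gf n (n+t) = ∑ t ∈ range n, gfun n t := by
    apply Finset.sum_congr rfl
    intro t ht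
    rw [Gf, if_neg (by omega)]
    congr 1
    omega
  rw [e1, e2, sum_gfun n hn]
  ring

lemma POS_eq (n : ℕ) (hn : 0 < n) :
    POS (IDmat (2*n)) (STmat (2*n)) = 2*((n:ℝ)^2-1)/3 := by
  have hsum : ∑ j : Fin (2*n), Gf n (j:ℕ) = 2*((n:ℝ)^2-1)/3 := by
    rw [Fin.sum_univ_eq_sum_range (fun j => Gf n j), sum_G n hn]
  unfold POS
  apply le_antisymm
  · refine le_trans (Finset.inf'_le _ (Finset.mem_univ (1 : Equiv.Perm (Fin (2*n))))) ?_
    have h1 : ∀ j : Fin (2*n),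
        emd (fun i => IDmat (2*n) i j) (fun i => STmat (2*n) i ((1 : Equiv.Perm (Fin (2*n))) j))
        = Gf n (j:ℕ) := by
      intro j
      rw [Equiv.Perm.one_apply]
      exact emd_id n hn j
    rw [Finset.sum_congr rfl (fun j _ => h1 j), hsum]
  · apply Finset.le_inf'
    intro σ _
    rw [← hsum]
    exact Finset.sum_le_sum (fun j _ => emd_ge n hn j (σ j))

theorem pos_ID_ST (m : ℕ) (hm : 0 < m) (h4 : 4 ∣ m) :
    POS (IDmat m) (STmat m) = (2 / 3) * ((m : ℝ) ^ 2 / 4 - 1) := by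
  obtain ⟨q, rfl⟩ := h4
  have hq : 0 < q := by omega
  rw [show 4*q = 2*(2*q) from by ring]
  rw [POS_eq (2*q) (by omega)]
  push_cast
  ring
end

section
/- If m is a positive integer divisible by 4, then POS(UN_m, AN_m) = (2/3)·(m²/4 − 1). -/
/-!
Every column of `UN_m` is the uniform vector, so the permutation in `POS` plays no role and
`POS(UN_m, AN_m)` is the sum over `j` of the EMD between the uniform vector and the `j`-th column
of `AN_m`, which puts mass `1/2` on rows `j` and `m-1-j`. For `m = 2n` and `j < n`, the prefix-sum
gap at `k` is `(k + 1 - n c_k)/m`, where `c_k ∈ {0, 1, 2}` counts those two rows up to `k`. On each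
of the four intervals cut out by `j`, `n`, `m-1-j` the gap runs through an arithmetic progression of
step `±1/m`, so column `j` costs `(j(j+1) + (n-j)(n-j-1))/m`. Columns `j` and `m-1-j` coincide,
and `∑_{j<n} (j(j+1) + (n-j)(n-j-1)) = 2(n³-n)/3`.
-/

open Finset

lemma POS_eq_sum_emd_of_columns_eq {m : ℕ} (X Y : Matrix (Fin m) (Fin m) ℝ)
    (hX : ∀ i j j', X i j = X i j') :
    POS X Y = ∑ j, emd (fun i => X i j) (fun i => Y i j) := by
  have hσ : ∀ σ : Equiv.Perm (Fin m),
      ∑ j, emd (fun i => X i j) (fun i => Y i (σ j)) =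
        ∑ j, emd (fun i => X i j) (fun i => Y i j) := fun σ =>
    calc ∑ j, emd (fun i => X i j) (fun i => Y i (σ j))
        = ∑ j, emd (fun i => X i (σ j)) (fun i => Y i (σ j)) :=
          sum_congr rfl fun j _ => by simp only [hX _ j (σ j)]
      _ = ∑ j, emd (fun i => X i j) (fun i => Y i j) :=
          Equiv.sum_comp σ fun j => emd (fun i => X i j) (fun i => Y i j)
  simp only [POS, hσ, inf'_const]

lemma sum_Iic_ANmat {m : ℕ} (j k : Fin m) :
    ∑ i ∈ Iic k, ANmat m i j = ((if j ≤ k then 1 else 0) + (if j.rev ≤ k then 1 else 0)) / 2 := by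
  have hrev : ∀ i : Fin m, (i : ℕ) + j + 1 = m ↔ i = j.rev := by
    intro i
    rw [Fin.ext_iff, Fin.val_rev]
    omega
  simp only [ANmat, ← sum_div, sum_add_distrib, hrev, sum_ite_eq', mem_Iic]

lemma two_mul_sum_Ico_abs_of_le {p q c : ℕ} (hpq : p ≤ q) (hc : c ≤ p) :
    2 * ∑ k ∈ Ico p q, |(k : ℝ) + 1 - c| = (q - c) * (q - c + 1) - (p - c) * (p - c + 1) := by
  induction q, hpq using Nat.le_induction with
  | base => simp
  | succ q hpq ih =>
    have hk : (c : ℝ) ≤ q := by exact_mod_cast hc.trans hpq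
    rw [sum_Ico_succ_top hpq, mul_add, ih, abs_of_nonneg (by linarith)]
    push_cast
    ring

lemma two_mul_sum_Ico_abs_of_ge {p q c : ℕ} (hpq : p ≤ q) (hc : q ≤ c) :
    2 * ∑ k ∈ Ico p q, |(k : ℝ) + 1 - c| = (c - p) * (c - p - 1) - (c - q) * (c - q - 1) := by
  induction q, hpq using Nat.le_induction with
  | base => simp
  | succ q hpq ih =>
    have hk : (q : ℝ) + 1 ≤ c := by exact_mod_cast hc
    rw [sum_Ico_succ_top hpq, mul_add, ih (by omega), abs_of_nonpos (by linarith)]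
    push_cast
    ring

lemma two_mul_sum_abs_sub_two_steps {n a b : ℕ} (ha : a ≤ n) (hb : n ≤ b) (hb' : b ≤ 2 * n) :
    2 * ∑ k ∈ range (2 * n),
        |(k : ℝ) + 1 - n * ((if a ≤ k then 1 else 0) + (if b ≤ k then 1 else 0))| =
      a * (a + 1) + (n - a) * (n - a - 1) + (b - n) * (b - n + 1) +
        (2 * n - b) * (2 * n - b - 1) := by
  set f : ℕ → ℝ := fun k =>
    |(k : ℝ) + 1 - n * ((if a ≤ k then 1 else 0) + (if b ≤ k then 1 else 0))| with hf
  have piece : ∀ p q c : ℕ, (∀ k ∈ Ico p q,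
      (n : ℝ) * ((if a ≤ k then 1 else 0) + (if b ≤ k then 1 else 0)) = c) →
      ∑ k ∈ Ico p q, f k = ∑ k ∈ Ico p q, |(k : ℝ) + 1 - c| := fun p q c hc =>
    sum_congr rfl fun k hk => by simp only [hf, hc k hk]
  have h₁ : 2 * ∑ k ∈ Ico 0 a, f k = a * (a + 1) := by
    rw [piece 0 a 0 fun k hk => by
      rw [mem_Ico] at hk
      simp [show ¬a ≤ k by omega, show ¬b ≤ k by omega]]
    rw [two_mul_sum_Ico_abs_of_le (Nat.zero_le a) le_rfl]
    push_cast
    ring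
  have h₂ : 2 * ∑ k ∈ Ico a n, f k = (n - a) * (n - a - 1) := by
    rw [piece a n n fun k hk => by
      rw [mem_Ico] at hk
      simp [show a ≤ k by omega, show ¬b ≤ k by omega]]
    rw [two_mul_sum_Ico_abs_of_ge ha le_rfl]
    ring
  have h₃ : 2 * ∑ k ∈ Ico n b, f k = (b - n) * (b - n + 1) := by
    rw [piece n b n fun k hk => by
      rw [mem_Ico] at hk
      simp [show a ≤ k by omega, show ¬b ≤ k by omega]]
    rw [two_mul_sum_Ico_abs_of_le hb le_rfl]
    ring
  have h₄ : 2 * ∑ k ∈ Ico b (2 * n), f k = (2 * n - b) * (2 * n - b - 1) := by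
    rw [piece b (2 * n) (2 * n) fun k hk => by
      rw [mem_Ico] at hk
      simp only [show a ≤ k by omega, show b ≤ k by omega, if_true]
      push_cast
      ring]
    rw [two_mul_sum_Ico_abs_of_ge hb' le_rfl]
    push_cast
    ring
  rw [range_eq_Ico, ← sum_Ico_consecutive f (Nat.zero_le a) (ha.trans (hb.trans hb')),
    ← sum_Ico_consecutive f ha (hb.trans hb'), ← sum_Ico_consecutive f hb hb']
  linear_combination h₁ + h₂ + h₃ + h₄

lemma sum_range_two_mul_of_reflect {M : Type*} [AddCommMonoid M] (f : ℕ → M) (n : ℕ)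
    (hf : ∀ j < n, f (2 * n - 1 - j) = f j) :
    ∑ j ∈ range (2 * n), f j = 2 • ∑ j ∈ range n, f j := by
  rw [two_mul, sum_range_add, two_nsmul, ← sum_range_reflect (fun j => f (n + j))]
  congr 1
  refine sum_congr rfl fun j hj => ?_
  rw [mem_range] at hj
  rw [← hf j hj]
  congr 1
  omega

lemma three_mul_sum_range_mul_succ (n : ℕ) :
    3 * ∑ p ∈ range n, (p : ℝ) * (p + 1) = (n - 1) * n * (n + 1) := by
  induction n with
  | zero => simp
  | succ n ih =>
    rw [sum_range_succ, mul_add, ih]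
    push_cast
    ring

noncomputable def anCost (n j : ℕ) : ℝ :=
  ∑ k ∈ range (2 * n),
    |(k : ℝ) + 1 - n * ((if j ≤ k then 1 else 0) + (if 2 * n - 1 - j ≤ k then 1 else 0))|

lemma emd_UNmat_ANmat {n : ℕ} (j : Fin (2 * n)) :
    emd (fun i => UNmat (2 * n) i j) (fun i => ANmat (2 * n) i j) = anCost n j / (2 * n) := by
  have hn : (n : ℝ) ≠ 0 := Nat.cast_ne_zero.mpr (by have := j.pos; omega)
  unfold emd anCost
  rw [← Fin.sum_univ_eq_sum_range, sum_div]
  refine sum_congr rfl fun k _ => ?_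
  have hrev : j.rev ≤ k ↔ 2 * n - 1 - j ≤ k := by
    rw [Fin.le_iff_val_le_val, Fin.val_rev]
    omega
  simp only [UNmat, sum_Iic_ANmat, hrev]
  simp only [Fin.le_iff_val_le_val]
  rw [sum_const, Fin.card_Iic, nsmul_eq_mul, ← abs_of_pos (by positivity : (0 : ℝ) < 2 * n), ← abs_div]
  congr 1
  field_simp
  push_cast
  ring

lemma anCost_reflect {n j : ℕ} (hj : j < 2 * n) : anCost n (2 * n - 1 - j) = anCost n j := by
  unfold anCost
  rw [show 2 * n - 1 - (2 * n - 1 - j) = j by omega]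
  simp only [add_comm]

lemma anCost_of_lt {n j : ℕ} (hj : j < n) :
    anCost n j = j * (j + 1) + (n - j) * (n - j - 1) := by
  have hb : ((2 * n - 1 - j : ℕ) : ℝ) = 2 * n - 1 - j := by
    rw [Nat.cast_sub (by omega), Nat.cast_sub (by omega)]
    push_cast
    ring
  have h := two_mul_sum_abs_sub_two_steps (a := j) (b := 2 * n - 1 - j) hj.le (by omega) (by omega)
  rw [hb] at h
  rw [anCost]
  linear_combination h / 2

lemma sum_range_anCost (n : ℕ) : 3 * ∑ j ∈ range (2 * n), anCost n j = 4 * (n ^ 3 - n) := by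
  have hhalf : ∑ j ∈ range n, anCost n j = 2 * ∑ p ∈ range n, (p : ℝ) * (p + 1) := by
    rw [two_mul]
    nth_rw 2 [← sum_range_reflect]
    rw [← sum_add_distrib]
    refine sum_congr rfl fun j hj => ?_
    rw [mem_range] at hj
    rw [anCost_of_lt hj, Nat.cast_sub (by omega), Nat.cast_sub (by omega)]
    push_cast
    ring
  rw [sum_range_two_mul_of_reflect _ n fun j hj => anCost_reflect (by omega), hhalf, nsmul_eq_mul]
  linear_combination 4 * three_mul_sum_range_mul_succ n

theorem pos_UN_AN (m : ℕ) (hm : 0 < m) (h4 : 4 ∣ m) :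
    POS (UNmat m) (ANmat m) = (2 / 3) * ((m : ℝ) ^ 2 / 4 - 1) := by
  obtain ⟨n, rfl⟩ : 2 ∣ m := dvd_trans (by norm_num) h4
  have hn : (n : ℝ) ≠ 0 := Nat.cast_ne_zero.mpr (by omega)
  rw [POS_eq_sum_emd_of_columns_eq _ _ fun _ _ _ => rfl]
  simp only [emd_UNmat_ANmat]
  rw [← sum_div, Fin.sum_univ_eq_sum_range (anCost n)]
  have := sum_range_anCost n
  field_simp
  push_cast
  linear_combination 4 * this
end

section
/- If m is a positive integer divisible by 4, then POS(AN_m, ST_m) = (13/48)·m² − 1/3. -/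
open Finset

namespace PosANST

noncomputable def pan (t j k : ℕ) : ℝ :=
  ((if j ≤ k then 1 else 0) + (if 4*t ≤ j + k + 1 then 1 else 0)) / 2

noncomputable def pstu (t k : ℕ) : ℝ := (min (k+1) (2*t) : ℕ) * (2 / ((4*t : ℕ) : ℝ))

noncomputable def pstv (t k : ℕ) : ℝ := ((k+1) - min (k+1) (2*t) : ℕ) * (2 / ((4*t : ℕ) : ℝ))

noncomputable def inS (t j : ℕ) : ℝ := ∑ k ∈ range (4*t), |pan t j k - pstu t k|

lemma sum_Iic_eq_range {m : ℕ} (k : Fin m) (f : ℕ → ℝ) :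
    ∑ i ∈ Iic k, f (i : ℕ) = ∑ i ∈ range ((k : ℕ) + 1), f i := by
  have h1 : ∑ i ∈ Iic k, f (i : ℕ) = ∑ i ∈ (Iic k).map Fin.valEmbedding, f i := by
    rw [Finset.sum_map]; rfl
  rw [h1, Fin.map_valEmbedding_Iic]
  congr 1
  ext x; simp [Nat.lt_succ_iff]

lemma sum_range_if_lt_const (N c : ℕ) (x : ℝ) :
    ∑ i ∈ range N, (if i < c then x else 0) = (min N c : ℕ) * x := by
  induction N with
  | zero => simp
  | succ n ih =>
    rw [sum_range_succ, ih]
    by_cases h : n < c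
    · rw [if_pos h, show min (n+1) c = min n c + 1 by omega]
      push_cast; ring
    · rw [if_neg h, add_zero, show min (n+1) c = min n c by omega]

lemma sum_Ico_quad (c d e : ℝ) (a b : ℕ) (h : a ≤ b) :
    ∑ k ∈ Ico a b, (c*(k:ℝ)^2 + d*(k:ℝ) + e)
      = c*((b:ℝ)*(b-1)*(2*b-1) - (a:ℝ)*(a-1)*(2*a-1))/6
        + d*((b:ℝ)*(b-1) - (a:ℝ)*(a-1))/2 + ((b:ℝ)-(a:ℝ))*e := by
  induction b, h using Nat.le_induction with
  | base => rw [Ico_self, sum_empty]; ring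
  | succ n hn ih =>
    rw [Finset.sum_Ico_succ_top (by omega), ih]
    push_cast; ring


lemma sum_Iic_eq_range' {m : ℕ} (k : Fin m) (g : Fin m → ℝ) (f : ℕ → ℝ)
    (hgf : ∀ i : Fin m, g i = f (i:ℕ)) :
    ∑ i ∈ Iic k, g i = ∑ i ∈ range ((k : ℕ) + 1), f i := by
  rw [show g = fun i => f i.val from funext hgf]
  exact sum_Iic_eq_range k f

lemma prefix_AN (t : ℕ) (j k : Fin (4*t)) :
    ∑ i ∈ Iic k, ANmat (4*t) i j = pan t (j:ℕ) (k:ℕ) := by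
  have hj : (j:ℕ) < 4*t := j.isLt
  have hconv : ∀ i : Fin (4*t), ANmat (4*t) i j
      = (fun n => ((if n = (j:ℕ) then (1:ℝ) else 0)
          + (if n + (j:ℕ) + 1 = 4*t then 1 else 0)) / 2) (i:ℕ) := by
    intro i; simp [ANmat, Fin.ext_iff]
  rw [sum_Iic_eq_range' k _ (fun n => ((if n = (j:ℕ) then (1:ℝ) else 0)
      + (if n + (j:ℕ) + 1 = 4*t then 1 else 0)) / 2) hconv]
  have e : ∀ n, ((if n = (j:ℕ) then (1:ℝ) else 0) + (if n + (j:ℕ) + 1 = 4*t then 1 else 0)) / 2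
      = (if n = (j:ℕ) then (1:ℝ) else 0)/2 + (if n = 4*t-1-(j:ℕ) then (1:ℝ) else 0)/2 := by
    intro n
    rw [if_congr (show (n + (j:ℕ) + 1 = 4*t) ↔ (n = 4*t-1-(j:ℕ)) by omega) rfl rfl]
    ring
  rw [Finset.sum_congr rfl (fun n _ => e n), Finset.sum_add_distrib,
    ← Finset.sum_div, ← Finset.sum_div, Finset.sum_ite_eq', Finset.sum_ite_eq']
  simp only [mem_range]
  rw [if_congr (show ((j:ℕ) < (k:ℕ)+1) ↔ ((j:ℕ) ≤ (k:ℕ)) by omega) rfl rfl,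
      if_congr (show (4*t-1-(j:ℕ) < (k:ℕ)+1) ↔ (4*t ≤ (j:ℕ)+(k:ℕ)+1) by omega) rfl rfl, pan]
  ring

lemma prefix_ST (t : ℕ) (ht : 0 < t) (j k : Fin (4*t)) :
    ∑ i ∈ Iic k, STmat (4*t) i j
      = if (j:ℕ) < 2*t then pstu t (k:ℕ) else pstv t (k:ℕ) := by
  have h2 : 4*t/2 = 2*t := by omega
  have hconv : ∀ i : Fin (4*t), STmat (4*t) i j
      = (fun n => if ((n < 2*t) ↔ ((j:ℕ) < 2*t)) then (2 / ((4*t:ℕ):ℝ)) else 0) (i:ℕ) := by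
    intro i; simp only [STmat, h2]
  rw [sum_Iic_eq_range' k _
      (fun n => if ((n < 2*t) ↔ ((j:ℕ) < 2*t)) then (2 / ((4*t:ℕ):ℝ)) else 0) hconv]
  by_cases hj : (j:ℕ) < 2*t
  · rw [if_pos hj]
    have e : ∀ n, (if ((n < 2*t) ↔ ((j:ℕ) < 2*t)) then (2 / ((4*t:ℕ):ℝ)) else 0)
        = (if n < 2*t then (2 / ((4*t:ℕ):ℝ)) else 0) := by
      intro n; simp [hj]
    rw [Finset.sum_congr rfl (fun n _ => e n), sum_range_if_lt_const]
    rfl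
  · rw [if_neg hj]
    have e : ∀ n, (if ((n < 2*t) ↔ ((j:ℕ) < 2*t)) then (2 / ((4*t:ℕ):ℝ)) else 0)
        = (2 / ((4*t:ℕ):ℝ)) - (if n < 2*t then (2 / ((4*t:ℕ):ℝ)) else 0) := by
      intro n; by_cases h : n < 2*t <;> simp [h, hj]
    rw [Finset.sum_congr rfl (fun n _ => e n), Finset.sum_sub_distrib, sum_range_if_lt_const,
        Finset.sum_const, card_range, nsmul_eq_mul]
    rw [pstv, Nat.cast_sub (Nat.min_le_left _ _)]
    push_cast
    ring


-- reflection lemmas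
lemma pan_last (t j : ℕ) (hj : j < 4*t) : pan t j (4*t-1) = 1 := by
  rw [pan, if_pos (by omega), if_pos (by omega)]; norm_num

lemma pstu_last (t : ℕ) (ht : 0 < t) : pstu t (4*t-1) = 1 := by
  rw [pstu, show min (4*t-1+1) (2*t) = 2*t by omega]
  push_cast
  field_simp
  ring

lemma pstv_last (t : ℕ) (ht : 0 < t) : pstv t (4*t-1) = 1 := by
  rw [pstv, show 4*t-1+1 - min (4*t-1+1) (2*t) = 2*t by omega]
  push_cast
  field_simp
  ring

lemma pan_reflect (t j k : ℕ) (hj : j < 4*t) (hk : k < 4*t-1) :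
    pan t j (4*t-2-k) = 1 - pan t j k := by
  rw [pan, pan,
    if_congr (show (j ≤ 4*t-2-k) ↔ ¬(4*t ≤ j + k + 1) by omega) rfl rfl,
    if_congr (show (4*t ≤ j + (4*t-2-k) + 1) ↔ ¬(j ≤ k) by omega) rfl rfl]
  by_cases h1 : j ≤ k <;> by_cases h2 : 4*t ≤ j + k + 1 <;>
    simp [h1, h2] <;> norm_num

lemma pstv_reflect (t k : ℕ) (ht : 0 < t) (hk : k < 4*t-1) :
    pstv t (4*t-2-k) = 1 - pstu t k := by
  have h4 : ((4*t:ℕ):ℝ) = 4*(t:ℝ) := by push_cast; ring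
  have htR : (0:ℝ) < (t:ℝ) := by exact_mod_cast ht
  rw [pstv, pstu, h4]
  by_cases h : k + 1 ≤ 2*t
  · rw [show (4*t-2-k+1) - min (4*t-2-k+1) (2*t) = 2*t - (k+1) by omega,
        show min (k+1) (2*t) = k+1 by omega, Nat.cast_sub (by omega)]
    push_cast
    field_simp
    ring
  · rw [show (4*t-2-k+1) - min (4*t-2-k+1) (2*t) = 0 by omega,
        show min (k+1) (2*t) = 2*t by omega]
    push_cast
    field_simp
    ring

lemma inS_v (t : ℕ) (ht : 0 < t) (j : ℕ) (hj : j < 4*t) :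
    ∑ k ∈ range (4*t), |pan t j k - pstv t k| = inS t j := by
  rw [inS]
  obtain ⟨M, hM⟩ : ∃ M, 4*t = M + 1 := ⟨4*t-1, by omega⟩
  have hM' : M = 4*t-1 := by omega
  rw [hM, sum_range_succ, sum_range_succ]
  have hz1 : |pan t j M - pstv t M| = 0 := by
    rw [hM', pan_last t j hj, pstv_last t ht]; simp
  have hz2 : |pan t j M - pstu t M| = 0 := by
    rw [hM', pan_last t j hj, pstu_last t ht]; simp
  rw [hz1, hz2]
  congr 1
  rw [← Finset.sum_range_reflect]
  refine Finset.sum_congr rfl fun k hk => ?_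
  rw [mem_range] at hk
  have hMk : M - 1 - k = 4*t-2-k := by omega
  have hk' : k < 4*t-1 := by omega
  rw [hMk, pan_reflect t j k hj hk', pstv_reflect t k ht hk']
  rw [show (1 - pan t j k) - (1 - pstu t k) = -(pan t j k - pstu t k) by ring, abs_neg]

lemma inS_reflect (t j : ℕ) (hj : j < 4*t) : inS t (4*t-1-j) = inS t j := by
  rw [inS, inS]
  refine Finset.sum_congr rfl fun k _ => ?_
  have hp : pan t (4*t-1-j) k = pan t j k := by
    rw [pan, pan,
      if_congr (show (4*t-1-j ≤ k) ↔ (4*t ≤ j + k + 1) by omega) rfl rfl,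
      if_congr (show (4*t ≤ 4*t-1-j + k + 1) ↔ (j ≤ k) by omega) rfl rfl,
      add_comm]
  rw [hp]

lemma sum_split (t : ℕ) (ht : 0 < t) :
    ∑ j ∈ range (4*t), inS t j = 2 * ∑ j ∈ range (2*t), inS t j := by
  have h2 : ∑ j ∈ Ico (2*t) (4*t), inS t j = ∑ j ∈ range (2*t), inS t j := by
    rw [Finset.sum_Ico_eq_sum_range, show 4*t - 2*t = 2*t by omega, ← Finset.sum_range_reflect]
    refine Finset.sum_congr rfl fun j hj => ?_
    rw [mem_range] at hj
    rw [show 2*t + (2*t-1-j) = 4*t-1-j by omega, inS_reflect t j (by omega)]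
  have h0 : ∑ j ∈ Ico 0 (2*t), inS t j + ∑ j ∈ Ico (2*t) (4*t), inS t j
      = ∑ j ∈ Ico 0 (4*t), inS t j :=
    Finset.sum_Ico_consecutive _ (by omega) (by omega)
  rw [range_eq_Ico, ← h0, h2, ← range_eq_Ico]
  ring


lemma mulbound_le (t : ℕ) (ht : 0 < t) (x : ℝ) (hx : x ≤ (t:ℝ)) :
    x * (2/(4*(t:ℝ))) ≤ 1/2 := by
  have htR : (0:ℝ) < t := by exact_mod_cast ht
  rw [show (2:ℝ)/(4*(t:ℝ)) = 1/(2*t) by field_simp; ring, mul_one_div,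
    div_le_div_iff₀ (by linarith) (by norm_num)]
  linarith

lemma mulbound_ge (t : ℕ) (ht : 0 < t) (x : ℝ) (hx : (t:ℝ) ≤ x) :
    1/2 ≤ x * (2/(4*(t:ℝ))) := by
  have htR : (0:ℝ) < t := by exact_mod_cast ht
  rw [show (2:ℝ)/(4*(t:ℝ)) = 1/(2*t) by field_simp; ring, mul_one_div,
    div_le_div_iff₀ (by norm_num) (by linarith)]
  linarith

lemma pstu_big (t k : ℕ) (ht : 0 < t) (hk : 2*t ≤ k+1) : pstu t k = 1 := by
  have htR : (0:ℝ) < (t:ℝ) := by exact_mod_cast ht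
  rw [pstu, show min (k+1) (2*t) = 2*t by omega]
  push_cast
  field_simp
  ring

lemma inner_low (t j : ℕ) (ht : 0 < t) (hj : j < t) :
    inS t j = (j:ℝ)^2/(2*(t:ℝ)) + (j:ℝ)/(2*(t:ℝ)) - (j:ℝ) + 3*(t:ℝ)/2 - 1/2 := by
  have htR : (0:ℝ) < (t:ℝ) := by exact_mod_cast ht
  have h4 : ((4*t:ℕ):ℝ) = 4*(t:ℝ) := by push_cast; ring
  rw [inS, range_eq_Ico,
      ← Finset.sum_Ico_consecutive _ (show (0:ℕ) ≤ j by omega) (show j ≤ 4*t by omega),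
      ← Finset.sum_Ico_consecutive _ (show j ≤ t by omega) (show t ≤ 4*t by omega),
      ← Finset.sum_Ico_consecutive _ (show t ≤ 2*t by omega) (show 2*t ≤ 4*t by omega),
      ← Finset.sum_Ico_consecutive _ (show 2*t ≤ 4*t-1-j by omega) (show 4*t-1-j ≤ 4*t by omega)]
  have p1 : ∑ k ∈ Ico 0 j, |pan t j k - pstu t k|
      = ∑ k ∈ Ico 0 j, ((0:ℝ)*(k:ℝ)^2 + (1/(2*(t:ℝ)))*(k:ℝ) + 1/(2*(t:ℝ))) := by
    refine Finset.sum_congr rfl fun k hk => ?_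
    rw [mem_Ico] at hk
    have hpan : pan t j k = 0 := by
      rw [pan, if_neg (by omega), if_neg (by omega)]; norm_num
    have hmin : min (k+1) (2*t) = k+1 := by omega
    rw [hpan, pstu, hmin, h4, zero_sub, abs_neg, abs_of_nonneg (by positivity)]
    push_cast
    field_simp
    ring
  have p2 : ∑ k ∈ Ico j t, |pan t j k - pstu t k|
      = ∑ k ∈ Ico j t, ((0:ℝ)*(k:ℝ)^2 + (-(1/(2*(t:ℝ))))*(k:ℝ) + (1/2 - 1/(2*(t:ℝ)))) := by
    refine Finset.sum_congr rfl fun k hk => ?_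
    rw [mem_Ico] at hk
    have hpan : pan t j k = 1/2 := by
      rw [pan, if_pos hk.1, if_neg (by omega)]; norm_num
    have hmin : min (k+1) (2*t) = k+1 := by omega
    have hle : ((k:ℕ)+1 : ℝ) ≤ (t:ℝ) := by exact_mod_cast (show k+1 ≤ t by omega)
    rw [hpan, pstu, hmin, h4, abs_of_nonneg (by
      have := mulbound_le t ht ((k:ℕ)+1 : ℝ) hle
      push_cast at this ⊢
      linarith)]
    push_cast
    field_simp
    ring
  have p3 : ∑ k ∈ Ico t (2*t), |pan t j k - pstu t k|
      = ∑ k ∈ Ico t (2*t), ((0:ℝ)*(k:ℝ)^2 + (1/(2*(t:ℝ)))*(k:ℝ) + (1/(2*(t:ℝ)) - 1/2)) := by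
    refine Finset.sum_congr rfl fun k hk => ?_
    rw [mem_Ico] at hk
    have hpan : pan t j k = 1/2 := by
      rw [pan, if_pos (by omega), if_neg (by omega)]; norm_num
    have hmin : min (k+1) (2*t) = k+1 := by omega
    have hge : (t:ℝ) ≤ ((k:ℕ)+1 : ℝ) := by exact_mod_cast (show t ≤ k+1 by omega)
    rw [hpan, pstu, hmin, h4, abs_of_nonpos (by
      have := mulbound_ge t ht ((k:ℕ)+1 : ℝ) hge
      push_cast at this ⊢
      linarith)]
    push_cast
    field_simp
    ring
  have p4 : ∑ k ∈ Ico (2*t) (4*t-1-j), |pan t j k - pstu t k|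
      = ∑ k ∈ Ico (2*t) (4*t-1-j), ((0:ℝ)*(k:ℝ)^2 + (0:ℝ)*(k:ℝ) + 1/2) := by
    refine Finset.sum_congr rfl fun k hk => ?_
    rw [mem_Ico] at hk
    have hpan : pan t j k = 1/2 := by
      rw [pan, if_pos (by omega), if_neg (by omega)]; norm_num
    rw [hpan, pstu_big t k ht (by omega)]
    norm_num
  have p5 : ∑ k ∈ Ico (4*t-1-j) (4*t), |pan t j k - pstu t k|
      = ∑ k ∈ Ico (4*t-1-j) (4*t), ((0:ℝ)*(k:ℝ)^2 + (0:ℝ)*(k:ℝ) + 0) := by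
    refine Finset.sum_congr rfl fun k hk => ?_
    rw [mem_Ico] at hk
    have hpan : pan t j k = 1 := by
      rw [pan, if_pos (by omega), if_pos (by omega)]; norm_num
    rw [hpan, pstu_big t k ht (by omega)]
    norm_num
  rw [p1, p2, p3, p4, p5,
      sum_Ico_quad _ _ _ _ _ (show (0:ℕ) ≤ j by omega),
      sum_Ico_quad _ _ _ _ _ (show j ≤ t by omega),
      sum_Ico_quad _ _ _ _ _ (show t ≤ 2*t by omega),
      sum_Ico_quad _ _ _ _ _ (show 2*t ≤ 4*t-1-j by omega),
      sum_Ico_quad _ _ _ _ _ (show 4*t-1-j ≤ 4*t by omega)]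
  have hc : ((4*t-1-j:ℕ):ℝ) = 4*(t:ℝ) - 1 - (j:ℝ) := by
    rw [Nat.cast_sub (by omega), Nat.cast_sub (by omega)]
    push_cast; ring
  rw [hc]
  push_cast
  field_simp
  ring

lemma inner_high (t j : ℕ) (ht : 0 < t) (hj1 : t ≤ j) (hj2 : j < 2*t) :
    inS t j = (t:ℝ) := by
  have htR : (0:ℝ) < (t:ℝ) := by exact_mod_cast ht
  have h4 : ((4*t:ℕ):ℝ) = 4*(t:ℝ) := by push_cast; ring
  rw [inS, range_eq_Ico,
      ← Finset.sum_Ico_consecutive _ (show (0:ℕ) ≤ j by omega) (show j ≤ 4*t by omega),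
      ← Finset.sum_Ico_consecutive _ (show j ≤ 2*t by omega) (show 2*t ≤ 4*t by omega),
      ← Finset.sum_Ico_consecutive _ (show 2*t ≤ 4*t-1-j by omega) (show 4*t-1-j ≤ 4*t by omega)]
  have p1 : ∑ k ∈ Ico 0 j, |pan t j k - pstu t k|
      = ∑ k ∈ Ico 0 j, ((0:ℝ)*(k:ℝ)^2 + (1/(2*(t:ℝ)))*(k:ℝ) + 1/(2*(t:ℝ))) := by
    refine Finset.sum_congr rfl fun k hk => ?_
    rw [mem_Ico] at hk
    have hpan : pan t j k = 0 := by
      rw [pan, if_neg (by omega), if_neg (by omega)]; norm_num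
    have hmin : min (k+1) (2*t) = k+1 := by omega
    rw [hpan, pstu, hmin, h4, zero_sub, abs_neg, abs_of_nonneg (by positivity)]
    push_cast
    field_simp
    ring
  have p2 : ∑ k ∈ Ico j (2*t), |pan t j k - pstu t k|
      = ∑ k ∈ Ico j (2*t), ((0:ℝ)*(k:ℝ)^2 + (1/(2*(t:ℝ)))*(k:ℝ) + (1/(2*(t:ℝ)) - 1/2)) := by
    refine Finset.sum_congr rfl fun k hk => ?_
    rw [mem_Ico] at hk
    have hpan : pan t j k = 1/2 := by
      rw [pan, if_pos hk.1, if_neg (by omega)]; norm_num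
    have hmin : min (k+1) (2*t) = k+1 := by omega
    have hge : (t:ℝ) ≤ ((k:ℕ)+1 : ℝ) := by exact_mod_cast (show t ≤ k+1 by omega)
    rw [hpan, pstu, hmin, h4, abs_of_nonpos (by
      have := mulbound_ge t ht ((k:ℕ)+1 : ℝ) hge
      push_cast at this ⊢
      linarith)]
    push_cast
    field_simp
    ring
  have p4 : ∑ k ∈ Ico (2*t) (4*t-1-j), |pan t j k - pstu t k|
      = ∑ k ∈ Ico (2*t) (4*t-1-j), ((0:ℝ)*(k:ℝ)^2 + (0:ℝ)*(k:ℝ) + 1/2) := by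
    refine Finset.sum_congr rfl fun k hk => ?_
    rw [mem_Ico] at hk
    have hpan : pan t j k = 1/2 := by
      rw [pan, if_pos (by omega), if_neg (by omega)]; norm_num
    rw [hpan, pstu_big t k ht (by omega)]
    norm_num
  have p5 : ∑ k ∈ Ico (4*t-1-j) (4*t), |pan t j k - pstu t k|
      = ∑ k ∈ Ico (4*t-1-j) (4*t), ((0:ℝ)*(k:ℝ)^2 + (0:ℝ)*(k:ℝ) + 0) := by
    refine Finset.sum_congr rfl fun k hk => ?_
    rw [mem_Ico] at hk
    have hpan : pan t j k = 1 := by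
      rw [pan, if_pos (by omega), if_pos (by omega)]; norm_num
    rw [hpan, pstu_big t k ht (by omega)]
    norm_num
  rw [p1, p2, p4, p5,
      sum_Ico_quad _ _ _ _ _ (show (0:ℕ) ≤ j by omega),
      sum_Ico_quad _ _ _ _ _ (show j ≤ 2*t by omega),
      sum_Ico_quad _ _ _ _ _ (show 2*t ≤ 4*t-1-j by omega),
      sum_Ico_quad _ _ _ _ _ (show 4*t-1-j ≤ 4*t by omega)]
  have hc : ((4*t-1-j:ℕ):ℝ) = 4*(t:ℝ) - 1 - (j:ℝ) := by
    rw [Nat.cast_sub (by omega), Nat.cast_sub (by omega)]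
    push_cast; ring
  rw [hc]
  push_cast
  field_simp
  ring

lemma outer (t : ℕ) (ht : 0 < t) :
    ∑ j ∈ range (2*t), inS t j = (13*(t:ℝ)^2 - 1)/6 := by
  have htR : (0:ℝ) < (t:ℝ) := by exact_mod_cast ht
  have h0 : ∑ j ∈ Ico 0 t, inS t j + ∑ j ∈ Ico t (2*t), inS t j
      = ∑ j ∈ Ico 0 (2*t), inS t j :=
    Finset.sum_Ico_consecutive _ (by omega) (by omega)
  rw [range_eq_Ico, ← h0]
  have hA : ∑ j ∈ Ico 0 t, inS t j
      = ∑ j ∈ Ico 0 t, ((1/(2*(t:ℝ)))*(j:ℝ)^2 + (1/(2*(t:ℝ)) - 1)*(j:ℝ) + (3*(t:ℝ)/2 - 1/2)) := by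
    refine Finset.sum_congr rfl fun j hj => ?_
    rw [mem_Ico] at hj
    rw [inner_low t j ht hj.2]
    field_simp
    ring
  have hB : ∑ j ∈ Ico t (2*t), inS t j
      = ∑ j ∈ Ico t (2*t), ((0:ℝ)*(j:ℝ)^2 + (0:ℝ)*(j:ℝ) + (t:ℝ)) := by
    refine Finset.sum_congr rfl fun j hj => ?_
    rw [mem_Ico] at hj
    rw [inner_high t j ht hj.1 hj.2]
    ring
  rw [hA, hB,
      sum_Ico_quad _ _ _ _ _ (show (0:ℕ) ≤ t by omega),
      sum_Ico_quad _ _ _ _ _ (show t ≤ 2*t by omega)]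
  push_cast
  field_simp
  ring


lemma col_emd (t : ℕ) (ht : 0 < t) (j j' : Fin (4*t)) :
    emd (fun i => ANmat (4*t) i j) (fun i => STmat (4*t) i j') = inS t (j:ℕ) := by
  have e1 : ∀ k : Fin (4*t),
      |(∑ i ∈ Iic k, ANmat (4*t) i j) - (∑ i ∈ Iic k, STmat (4*t) i j')|
      = (fun n => |pan t (j:ℕ) n - (if ((j':ℕ) < 2*t) then pstu t n else pstv t n)|) (k:ℕ) := by
    intro k
    simp only [prefix_AN t j k, prefix_ST t ht j' k]
  calc emd (fun i => ANmat (4*t) i j) (fun i => STmat (4*t) i j')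
      = ∑ k : Fin (4*t),
          (fun n => |pan t (j:ℕ) n - (if ((j':ℕ) < 2*t) then pstu t n else pstv t n)|) (k:ℕ) := by
        rw [emd]; exact Finset.sum_congr rfl fun k _ => e1 k
    _ = ∑ n ∈ range (4*t),
          |pan t (j:ℕ) n - (if ((j':ℕ) < 2*t) then pstu t n else pstv t n)| :=
        Fin.sum_univ_eq_sum_range (fun n => |pan t (j:ℕ) n - (if ((j':ℕ) < 2*t) then pstu t n else pstv t n)|) (4*t)
    _ = inS t (j:ℕ) := by
        by_cases hj' : (j':ℕ) < 2*t
        · simp only [if_pos hj', inS]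
        · simp only [if_neg hj']
          exact inS_v t ht (j:ℕ) j.isLt


end PosANST

theorem pos_AN_ST (m : ℕ) (hm : 0 < m) (h4 : 4 ∣ m) :
    POS (ANmat m) (STmat m) = (13 / 48) * (m : ℝ) ^ 2 - 1 / 3 := by
  obtain ⟨t, rfl⟩ := h4
  have ht : 0 < t := by omega
  have hval : ∀ σ : Equiv.Perm (Fin (4*t)),
      (∑ j : Fin (4*t), emd (fun i => ANmat (4*t) i j) (fun i => STmat (4*t) i (σ j)))
      = 2 * ((13*(t:ℝ)^2 - 1)/6) := by
    intro σ
    calc (∑ j : Fin (4*t), emd (fun i => ANmat (4*t) i j) (fun i => STmat (4*t) i (σ j)))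
        = ∑ j : Fin (4*t), PosANST.inS t (j:ℕ) :=
          Finset.sum_congr rfl fun j _ => PosANST.col_emd t ht j (σ j)
      _ = ∑ n ∈ range (4*t), PosANST.inS t n := Fin.sum_univ_eq_sum_range (fun n => PosANST.inS t n) (4*t)
      _ = 2 * ((13*(t:ℝ)^2 - 1)/6) := by rw [PosANST.sum_split t ht, PosANST.outer t ht]
  rw [POS, show (fun σ : Equiv.Perm (Fin (4*t)) => ∑ j : Fin (4*t),
        emd (fun i => ANmat (4*t) i j) (fun i => STmat (4*t) i (σ j)))
      = (fun _ => 2*((13*(t:ℝ)^2-1)/6)) from funext hval, Finset.inf'_const]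
  push_cast
  ring
end

section
/- Let D(m) = (m² − 1)/3. Then, as m → ∞ along positive integers: POS(ID_{4m}, UN_{4m})/D(4m) = 1 for every m ≥ 1; POS(ID_{4m}, AN_{4m})/D(4m) → 3/4; POS(UN_{4m}, ST_{4m})/D(4m) → 3/4; POS(ID_{4m}, ST_{4m})/D(4m) → 1/2; POS(UN_{4m}, AN_{4m})/D(4m) → 1/2; and POS(AN_{4m}, ST_{4m})/D(4m) → 13/16. -/
open Finset

/-- The largest positionwise distance between two m×m frequency matrices. -/
noncomputable def D (m : ℕ) : ℝ := ((m : ℝ) ^ 2 - 1) / 3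


lemma sum_range_cast (n : ℕ) : ∑ k ∈ range n, (k:ℝ) = n*(n-1)/2 := by
  induction n with
  | zero => simp
  | succ n ih => rw [Finset.sum_range_succ, ih]; push_cast; ring

lemma sum_range_cast_sq (n : ℕ) : ∑ k ∈ range n, (k:ℝ)^2 = n*(n-1)*(2*n-1)/6 := by
  induction n with
  | zero => simp
  | succ n ih => rw [Finset.sum_range_succ, ih]; push_cast; ring

/-- Workhorse: sum of a quadratic-on-a-piece function over `Ico a b`. -/
lemma sum_piece (a b : ℕ) (hab : a ≤ b) (f : ℕ → ℝ) (p q r : ℝ)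
    (hf : ∀ n, a ≤ n → n < b → f n = p*(n:ℝ)^2 + q*(n:ℝ) + r) :
    ∑ n ∈ Ico a b, f n
      = p*((b:ℝ)*(b-1)*(2*b-1) - (a:ℝ)*(a-1)*(2*a-1))/6
        + q*((b:ℝ)*(b-1) - (a:ℝ)*(a-1))/2 + r*((b:ℝ)-a) := by
  have h1 : ∑ n ∈ Ico a b, f n = ∑ n ∈ Ico a b, (p*(n:ℝ)^2 + q*(n:ℝ) + r) := by
    refine Finset.sum_congr rfl fun n hn => ?_
    rw [Finset.mem_Ico] at hn
    exact hf n hn.1 hn.2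
  rw [h1, Finset.sum_Ico_eq_sub _ hab]
  simp only [Finset.sum_add_distrib, ← Finset.mul_sum, sum_range_cast, sum_range_cast_sq,
    Finset.sum_const, card_range, nsmul_eq_mul, mul_one]
  ring

lemma range_split (b M : ℕ) (h : b ≤ M) (f : ℕ → ℝ) :
    ∑ k ∈ range M, f k = ∑ k ∈ Ico 0 b, f k + ∑ k ∈ Ico b M, f k := by
  rw [Finset.sum_Ico_consecutive _ (Nat.zero_le b) h, ← range_eq_Ico]

lemma range_split3 (b c M : ℕ) (h1 : b ≤ c) (h2 : c ≤ M) (f : ℕ → ℝ) :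
    ∑ k ∈ range M, f k = ∑ k ∈ Ico 0 b, f k + ∑ k ∈ Ico b c, f k + ∑ k ∈ Ico c M, f k := by
  rw [Finset.sum_Ico_consecutive _ (Nat.zero_le b) h1,
    Finset.sum_Ico_consecutive _ (Nat.zero_le c) h2, ← range_eq_Ico]

lemma range_split4 (b c d M : ℕ) (h1 : b ≤ c) (h2 : c ≤ d) (h3 : d ≤ M) (f : ℕ → ℝ) :
    ∑ k ∈ range M, f k = ∑ k ∈ Ico 0 b, f k + ∑ k ∈ Ico b c, f k + ∑ k ∈ Ico c d, f k
      + ∑ k ∈ Ico d M, f k := by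
  rw [Finset.sum_Ico_consecutive _ (Nat.zero_le b) h1,
    Finset.sum_Ico_consecutive _ (Nat.zero_le c) h2,
    Finset.sum_Ico_consecutive _ (Nat.zero_le d) h3, ← range_eq_Ico]

/-- Convert a sum over `Iic k` in `Fin M` to a sum over `range (k+1)` in `ℕ`. -/
lemma sum_Iic_fin {M : ℕ} (k : Fin M) (x' : ℕ → ℝ) :
    ∑ i ∈ Finset.Iic k, x' (i : ℕ) = ∑ t ∈ range ((k:ℕ)+1), x' t := by
  refine Finset.sum_bij' (fun i _ => (i : ℕ)) (fun t ht => ⟨t, by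
    rw [Finset.mem_range] at ht; omega⟩) ?_ ?_ ?_ ?_ ?_
  · intro i hi; rw [Finset.mem_Iic] at hi; rw [Finset.mem_range]
    exact Nat.lt_succ_of_le hi
  · intro t ht; rw [Finset.mem_range] at ht; rw [Finset.mem_Iic]
    exact Fin.mk_le_of_le_val (by omega)
  · intro i hi; rfl
  · intro t ht; rfl
  · intro i hi; rfl

/-- Master conversion of `emd` to a `ℕ`-indexed double sum. -/
lemma emd_eq_range {M : ℕ} (x y : Fin M → ℝ) (x' y' : ℕ → ℝ)
    (hx : ∀ i : Fin M, x i = x' (i : ℕ)) (hy : ∀ i : Fin M, y i = y' (i : ℕ)) :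
    emd x y = ∑ n ∈ range M,
      |(∑ t ∈ range (n+1), x' t) - (∑ t ∈ range (n+1), y' t)| := by
  unfold emd
  rw [← Fin.sum_univ_eq_sum_range (fun n => |(∑ t ∈ range (n+1), x' t) - (∑ t ∈ range (n+1), y' t)|) M]
  refine Finset.sum_congr rfl fun k _ => ?_
  have h1 : (∑ i ∈ Finset.Iic k, x i) = ∑ t ∈ range ((k:ℕ)+1), x' t := by
    rw [show (∑ i ∈ Finset.Iic k, x i) = ∑ i ∈ Finset.Iic k, x' (i:ℕ) from
      Finset.sum_congr rfl fun i _ => hx i, sum_Iic_fin]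
  have h2 : (∑ i ∈ Finset.Iic k, y i) = ∑ t ∈ range ((k:ℕ)+1), y' t := by
    rw [show (∑ i ∈ Finset.Iic k, y i) = ∑ i ∈ Finset.Iic k, y' (i:ℕ) from
      Finset.sum_congr rfl fun i _ => hy i, sum_Iic_fin]
  rw [h1, h2]
/-- ℕ-indexed column functions -/
noncomputable def idcol (j : ℕ) : ℕ → ℝ := fun t => if t = j then 1 else 0
noncomputable def uncol (M : ℕ) : ℕ → ℝ := fun _ => 1/(M:ℝ)
noncomputable def ancol (M j : ℕ) : ℕ → ℝ :=
  fun t => ((if t = j then 1 else 0) + (if t + j + 1 = M then 1 else 0))/2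
noncomputable def stcolL (M : ℕ) : ℕ → ℝ := fun t => if t < M/2 then 2/(M:ℝ) else 0
noncomputable def stcolR (M : ℕ) : ℕ → ℝ := fun t => if t < M/2 then 0 else 2/(M:ℝ)

/-- matching lemmas -/
lemma id_match {M : ℕ} (j : Fin M) : ∀ i : Fin M, IDmat M i j = idcol (j:ℕ) (i:ℕ) := by
  intro i; simp only [IDmat, idcol, Fin.val_eq_val]
lemma un_match {M : ℕ} (j : Fin M) : ∀ i : Fin M, UNmat M i j = uncol M (i:ℕ) := by
  intro i; simp only [UNmat, uncol]
lemma an_match {M : ℕ} (j : Fin M) : ∀ i : Fin M, ANmat M i j = ancol M (j:ℕ) (i:ℕ) := by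
  intro i; simp only [ANmat, ancol, Fin.val_eq_val]
lemma st_matchL {M : ℕ} (j : Fin M) (hj : (j:ℕ) < M/2) :
    ∀ i : Fin M, STmat M i j = stcolL M (i:ℕ) := by
  intro i; simp only [STmat, stcolL, iff_true_intro hj, iff_true]
lemma st_matchR {M : ℕ} (j : Fin M) (hj : ¬ ((j:ℕ) < M/2)) :
    ∀ i : Fin M, STmat M i j = stcolR M (i:ℕ) := by
  intro i; simp only [STmat, stcolR, iff_false_intro hj, iff_false, not_lt]
  by_cases h : (i:ℕ) < M/2
  · simp [h, not_le.mpr h]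
  · simp [h, not_lt.mp h]

/-- prefix sums -/
lemma pre_id (j n : ℕ) : ∑ t ∈ range n, idcol j t = if j < n then 1 else 0 := by
  unfold idcol
  rw [Finset.sum_ite_eq' (range n) j (fun _ => (1:ℝ))]
  simp [Finset.mem_range]

lemma pre_un (M n : ℕ) : ∑ t ∈ range n, uncol M t = (n:ℝ)/M := by
  unfold uncol
  rw [Finset.sum_const, card_range, nsmul_eq_mul]
  ring

lemma pre_an (M j n : ℕ) (hj : j < M) :
    ∑ t ∈ range n, ancol M j t
      = ((if j < n then 1 else 0) + (if M - 1 - j < n then 1 else 0))/2 := by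
  unfold ancol
  rw [← Finset.sum_div, Finset.sum_add_distrib]
  congr 1
  congr 1
  · rw [Finset.sum_ite_eq' (range n) j (fun _ => (1:ℝ))]; simp [Finset.mem_range]
  · have : ∀ t ∈ range n, (if t + j + 1 = M then (1:ℝ) else 0)
        = (if t = M - 1 - j then (1:ℝ) else 0) := by
      intro t _; congr 1; simp only [eq_iff_iff]; omega
    rw [Finset.sum_congr rfl this,
      Finset.sum_ite_eq' (range n) (M-1-j) (fun _ => (1:ℝ))]
    simp [Finset.mem_range]

lemma pre_L (M n : ℕ) : ∑ t ∈ range n, stcolL M t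
    = if n ≤ M/2 then 2*(n:ℝ)/M else 2*((M/2 : ℕ):ℝ)/M := by
  unfold stcolL
  by_cases h : n ≤ M/2
  · rw [if_pos h]
    rw [Finset.sum_congr rfl (fun t ht => if_pos (by rw [Finset.mem_range] at ht; omega)),
      Finset.sum_const, card_range, nsmul_eq_mul]
    ring
  · rw [if_neg h, range_split (M/2) n (by omega)]
    have e1 : ∑ k ∈ Ico 0 (M/2), (if k < M/2 then 2/(M:ℝ) else 0) = ((M/2:ℕ):ℝ) * (2/M) := by
      rw [Finset.sum_congr rfl (fun t ht => if_pos (by rw [Finset.mem_Ico] at ht; omega)),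
        Finset.sum_const, Nat.card_Ico, nsmul_eq_mul]; simp
    have e2 : ∑ k ∈ Ico (M/2) n, (if k < M/2 then 2/(M:ℝ) else 0) = 0 := by
      rw [Finset.sum_congr rfl (fun t ht => if_neg (by rw [Finset.mem_Ico] at ht; omega)),
        Finset.sum_const, smul_zero]
    rw [e1, e2]; ring

lemma pre_R (M n : ℕ) : ∑ t ∈ range n, stcolR M t
    = if n ≤ M/2 then 0 else 2*((n:ℝ) - ((M/2:ℕ):ℝ))/M := by
  unfold stcolR
  by_cases h : n ≤ M/2
  · rw [if_pos h]
    rw [Finset.sum_congr rfl (fun t ht => if_pos (by rw [Finset.mem_range] at ht; omega)),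
      Finset.sum_const, smul_zero]
  · rw [if_neg h, range_split (M/2) n (by omega)]
    have e1 : ∑ k ∈ Ico 0 (M/2), (if k < M/2 then 0 else 2/(M:ℝ)) = 0 := by
      rw [Finset.sum_congr rfl (fun t ht => if_pos (by rw [Finset.mem_Ico] at ht; omega)),
        Finset.sum_const, smul_zero]
    have e2 : ∑ k ∈ Ico (M/2) n, (if k < M/2 then 0 else 2/(M:ℝ)) = ((n - M/2 : ℕ):ℝ) * (2/M) := by
      rw [Finset.sum_congr rfl (fun t ht => if_neg (by rw [Finset.mem_Ico] at ht; omega)),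
        Finset.sum_const, Nat.card_Ico, nsmul_eq_mul]
    rw [e1, e2]
    have : ((n - M/2 : ℕ):ℝ) = (n:ℝ) - ((M/2:ℕ):ℝ) := by
      have h2 : M/2 ≤ n := by omega
      push_cast [h2]; ring
    rw [this]; ring
lemma POS_eq_of_const {M : ℕ} {X Y : Matrix (Fin M) (Fin M) ℝ} {V : ℝ}
    (h : ∀ σ : Equiv.Perm (Fin M),
      ∑ j : Fin M, emd (fun i => X i j) (fun i => Y i (σ j)) = V) :
    POS X Y = V := by
  unfold POS
  rw [show (fun σ : Equiv.Perm (Fin M) =>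
      ∑ j : Fin M, emd (fun i => X i j) (fun i => Y i (σ j))) = fun _ => V from funext h]
  exact Finset.inf'_const _ _

lemma POS_eq_of_bounds {M : ℕ} {X Y : Matrix (Fin M) (Fin M) ℝ} {V : ℝ}
    (hub : ∑ j : Fin M, emd (fun i => X i j) (fun i => Y i j) = V)
    (hlb : ∀ σ : Equiv.Perm (Fin M),
      V ≤ ∑ j : Fin M, emd (fun i => X i j) (fun i => Y i (σ j))) :
    POS X Y = V := by
  refine le_antisymm ?_ ?_
  · refine le_trans (Finset.inf'_le _ (Finset.mem_univ (1 : Equiv.Perm (Fin M)))) ?_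
    simp only [Equiv.Perm.coe_one, id_eq]
    exact le_of_eq hub
  · exact Finset.le_inf' _ _ (fun σ _ => hlb σ)

lemma div_div_div_same (x y c : ℝ) (hc : c ≠ 0) : (x/c)/(y/c) = x/y := by
  rcases eq_or_ne y 0 with rfl | hy
  · simp
  · field_simp

lemma tendsto_quad_ratio (A B C E : ℝ) (hC : 0 < C) :
    Filter.Tendsto (fun m : ℕ => (A*(m:ℝ)^2+B)/(C*(m:ℝ)^2+E))
      Filter.atTop (nhds (A/C)) := by
  have h0 : Filter.Tendsto (fun m : ℕ => 1/(m:ℝ)) Filter.atTop (nhds 0) :=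
    tendsto_one_div_atTop_nhds_zero_nat
  have h1 : Filter.Tendsto (fun m : ℕ => (A + B*(1/(m:ℝ))^2)/(C + E*(1/(m:ℝ))^2))
      Filter.atTop (nhds ((A + B*0^2)/(C + E*0^2))) := by
    refine Filter.Tendsto.div ?_ ?_ (by simp; positivity)
    · exact tendsto_const_nhds.add (((h0.pow 2)).const_mul B)
    · exact tendsto_const_nhds.add (((h0.pow 2)).const_mul E)
  have h2 : (A + B*(0:ℝ)^2)/(C + E*0^2) = A/C := by norm_num
  rw [h2] at h1
  refine Filter.Tendsto.congr' ?_ h1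
  filter_upwards [Filter.eventually_atTop.mpr ⟨1, fun m hm => hm⟩] with m hm
  have hm0 : (m:ℝ) ≠ 0 := Nat.cast_ne_zero.mpr (by omega)
  have e1 : A + B*(1/(m:ℝ))^2 = (A*(m:ℝ)^2+B)/(m:ℝ)^2 := by field_simp
  have e2 : C + E*(1/(m:ℝ))^2 = (C*(m:ℝ)^2+E)/(m:ℝ)^2 := by field_simp
  rw [e1, e2, div_div_div_same _ _ _ (pow_ne_zero 2 hm0)]
lemma V1 (m : ℕ) (hm : 1 ≤ m) :
    POS (IDmat (4*m)) (UNmat (4*m)) = (16*(m:ℝ)^2 - 1)/3 := by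
  set M := 4*m with hMdef
  have hMR : (M:ℝ) = 4*(m:ℝ) := by rw [hMdef]; push_cast; ring
  have hM0 : (0:ℝ) < (M:ℝ) := by rw [hMR]; positivity
  have hMne : (M:ℝ) ≠ 0 := ne_of_gt hM0
  apply POS_eq_of_const
  intro σ
  have hcol : ∀ j : Fin M,
      emd (fun i => IDmat M i j) (fun i => UNmat M i (σ j))
        = ∑ n ∈ range M, |(if (j:ℕ) < n+1 then (1:ℝ) else 0) - ((n:ℝ)+1)/M| := by
    intro j
    rw [emd_eq_range _ _ (idcol (j:ℕ)) (uncol M) (id_match j) (un_match (σ j))]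
    refine Finset.sum_congr rfl fun n _ => ?_
    rw [pre_id, pre_un]
    push_cast
    ring_nf
  rw [Finset.sum_congr rfl (fun j _ => hcol j),
    Fin.sum_univ_eq_sum_range
      (fun jv => ∑ n ∈ range M, |(if jv < n+1 then (1:ℝ) else 0) - ((n:ℝ)+1)/M|) M,
    Finset.sum_comm]
  have inner : ∀ n, 0 ≤ n → n < M →
      (∑ j ∈ range M, |(if j < n+1 then (1:ℝ) else 0) - ((n:ℝ)+1)/M|)
        = (-2/M)*(n:ℝ)^2 + ((2*M-4)/M)*(n:ℝ) + (2*M-2)/M := by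
    intro n _ hn
    have hν : ((n:ℝ)+1) ≤ M := by exact_mod_cast Nat.succ_le_of_lt hn
    have hf1 : ∀ j, 0 ≤ j → j < n+1 →
        |(if j < n+1 then (1:ℝ) else 0) - ((n:ℝ)+1)/M|
          = 0*(j:ℝ)^2 + 0*(j:ℝ) + (1 - ((n:ℝ)+1)/M) := by
      intro j _ hj
      rw [if_pos hj, abs_of_nonneg (by
        rw [sub_nonneg]
        exact div_le_one_of_le₀ hν (le_of_lt hM0))]
      ring
    have hf2 : ∀ j, n+1 ≤ j → j < M →
        |(if j < n+1 then (1:ℝ) else 0) - ((n:ℝ)+1)/M|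
          = 0*(j:ℝ)^2 + 0*(j:ℝ) + ((n:ℝ)+1)/M := by
      intro j hj _
      rw [if_neg (by omega), abs_of_nonpos (by
        rw [sub_nonpos]
        positivity)]
      ring
    rw [range_split (n+1) M (by omega),
      sum_piece 0 (n+1) (by omega) _ 0 0 (1 - ((n:ℝ)+1)/M) hf1,
      sum_piece (n+1) M (by omega) _ 0 0 (((n:ℝ)+1)/M) hf2]
    push_cast
    field_simp
    ring
  rw [Finset.sum_congr rfl (fun n hn => inner n (Nat.zero_le n) (Finset.mem_range.mp hn)),
    range_eq_Ico, sum_piece 0 M (Nat.zero_le M) _ (-2/M) ((2*M-4)/M) ((2*M-2)/M)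
      (fun n _ _ => rfl)]
  rw [hMR]
  push_cast
  field_simp
  ring
lemma V3 (m : ℕ) (hm : 1 ≤ m) :
    POS (UNmat (4*m)) (STmat (4*m)) = 4*(m:ℝ)^2 := by
  set M := 4*m with hMdef
  have hM2 : M/2 = 2*m := by omega
  have hMR : (M:ℝ) = 4*(m:ℝ) := by rw [hMdef]; push_cast; ring
  have hM0 : (0:ℝ) < (M:ℝ) := by rw [hMR]; positivity
  have hMne : (M:ℝ) ≠ 0 := ne_of_gt hM0
  have colL : ∀ j : Fin M, (j:ℕ) < M/2 →
      emd (fun i => UNmat M i j) (fun i => STmat M i j) = (m:ℝ) := by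
    intro j hj
    rw [emd_eq_range _ _ (uncol M) (stcolL M) (un_match j) (st_matchL j hj)]
    have hf1 : ∀ n, 0 ≤ n → n < 2*m →
        |(∑ t ∈ range (n+1), uncol M t) - (∑ t ∈ range (n+1), stcolL M t)|
          = 0*(n:ℝ)^2 + (1/M)*(n:ℝ) + 1/M := by
      intro n _ hn
      rw [pre_un, pre_L, if_pos (by omega)]
      push_cast
      rw [show ((n:ℝ)+1)/M - 2*((n:ℝ)+1)/M = -(((n:ℝ)+1)/M) by ring, abs_neg,
        abs_of_nonneg (by positivity)]
      ring
    have hf2 : ∀ n, 2*m ≤ n → n < M →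
        |(∑ t ∈ range (n+1), uncol M t) - (∑ t ∈ range (n+1), stcolL M t)|
          = 0*(n:ℝ)^2 + (-1/M)*(n:ℝ) + (1 - 1/M) := by
      intro n hn hn2
      rw [pre_un, pre_L, if_neg (by omega), hM2]
      push_cast
      have h1 : 2*(2*(m:ℝ))/M = 1 := by rw [hMR]; field_simp; ring
      rw [h1, abs_of_nonpos (by
        rw [sub_nonpos]
        apply div_le_one_of_le₀ _ (le_of_lt hM0)
        rw [hMR]
        exact_mod_cast Nat.succ_le_of_lt hn2)]
      field_simp
      ring
    rw [range_split (2*m) M (by omega),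
      sum_piece 0 (2*m) (by omega) _ 0 (1/M) (1/M) hf1,
      sum_piece (2*m) M (by omega) _ 0 (-1/M) (1-1/M) hf2, hMR]
    push_cast
    field_simp
    ring
  have colR : ∀ j : Fin M, ¬((j:ℕ) < M/2) →
      emd (fun i => UNmat M i j) (fun i => STmat M i j) = (m:ℝ) := by
    intro j hj
    rw [emd_eq_range _ _ (uncol M) (stcolR M) (un_match j) (st_matchR j hj)]
    have hf1 : ∀ n, 0 ≤ n → n < 2*m →
        |(∑ t ∈ range (n+1), uncol M t) - (∑ t ∈ range (n+1), stcolR M t)|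
          = 0*(n:ℝ)^2 + (1/M)*(n:ℝ) + 1/M := by
      intro n _ hn
      rw [pre_un, pre_R, if_pos (by omega)]
      push_cast
      rw [sub_zero, abs_of_nonneg (by positivity)]
      ring
    have hf2 : ∀ n, 2*m ≤ n → n < M →
        |(∑ t ∈ range (n+1), uncol M t) - (∑ t ∈ range (n+1), stcolR M t)|
          = 0*(n:ℝ)^2 + (-1/M)*(n:ℝ) + (1 - 1/M) := by
      intro n hn hn2
      rw [pre_un, pre_R, if_neg (by omega), hM2]
      push_cast
      have hb : ((n:ℝ)+1) ≤ M := by rw [hMR]; exact_mod_cast Nat.succ_le_of_lt hn2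
      rw [abs_of_nonneg (by
        rw [sub_nonneg, div_le_div_iff₀ hM0 hM0]
        nlinarith [hM0, hb, hMR])]
      rw [hMR]
      field_simp
      ring
    rw [range_split (2*m) M (by omega),
      sum_piece 0 (2*m) (by omega) _ 0 (1/M) (1/M) hf1,
      sum_piece (2*m) M (by omega) _ 0 (-1/M) (1-1/M) hf2, hMR]
    push_cast
    field_simp
    ring
  apply POS_eq_of_const
  intro σ
  have hre : (fun j : Fin M => emd (fun i => UNmat M i j) (fun i => STmat M i (σ j)))
      = (fun j : Fin M =>
          (fun j' : Fin M => emd (fun i => UNmat M i j') (fun i => STmat M i j')) (σ j)) := rfl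
  rw [hre, Equiv.sum_comp σ
    (fun j' : Fin M => emd (fun i => UNmat M i j') (fun i => STmat M i j'))]
  have : ∀ j : Fin M, emd (fun i => UNmat M i j) (fun i => STmat M i j) = (m:ℝ) := by
    intro j
    by_cases hj : (j:ℕ) < M/2
    · exact colL j hj
    · exact colR j hj
  rw [Finset.sum_congr rfl (fun j _ => this j), Finset.sum_const, Finset.card_univ,
    Fintype.card_fin, nsmul_eq_mul, hMR]
  ring
lemma V2 (m : ℕ) (hm : 1 ≤ m) :
    POS (IDmat (4*m)) (ANmat (4*m)) = 4*(m:ℝ)^2 := by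
  set M := 4*m with hMdef
  have hMR : (M:ℝ) = 4*(m:ℝ) := by rw [hMdef]; push_cast; ring
  set L : ℕ → ℝ := fun jv => |(M:ℝ) - 1 - 2*jv|/2 with hL
  have hlbcol : ∀ (c j : Fin M),
      L (↑j) ≤ emd (fun i => IDmat M i c) (fun i => ANmat M i j) := by
    intro c j
    rw [emd_eq_range _ _ (idcol (c:ℕ)) (ancol M (j:ℕ)) (id_match c) (an_match j)]
    have hjM : (j:ℕ) < M := j.isLt
    rcases Nat.lt_or_ge (j:ℕ) (2*m) with hc1 | hc1
    · have hsub : Ico (j:ℕ) (M-1-(j:ℕ)) ⊆ range M := by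
        intro n hn
        rw [Finset.mem_Ico] at hn
        rw [Finset.mem_range]
        omega
      have heq : ∀ n ∈ Ico (j:ℕ) (M-1-(j:ℕ)),
          |(∑ t ∈ range (n+1), idcol (c:ℕ) t) - (∑ t ∈ range (n+1), ancol M (j:ℕ) t)|
            = 1/2 := by
        intro n hn
        rw [Finset.mem_Ico] at hn
        rw [pre_id, pre_an M (j:ℕ) (n+1) hjM, if_pos (show (j:ℕ) < n+1 by omega),
          if_neg (show ¬(M-1-(j:ℕ) < n+1) by omega)]
        by_cases hcn : (c:ℕ) < n+1
        · rw [if_pos hcn]; norm_num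
        · rw [if_neg hcn]; norm_num
      have h0 : (M-1-(j:ℕ)-(j:ℕ)) + 2*(j:ℕ) + 1 = M := by omega
      have h0' := congrArg (fun x : ℕ => (x:ℝ)) h0
      push_cast at h0'
      have hjr : ((j:ℕ):ℝ) + 1 ≤ 2*(m:ℝ) := by exact_mod_cast Nat.succ_le_of_lt hc1
      calc L ↑j = ((M-1-(j:ℕ)-(j:ℕ) : ℕ):ℝ)/2 := by
            simp only [hL]
            rw [abs_of_nonneg (by rw [hMR]; linarith)]
            rw [hMR] at h0' ⊢
            linarith
        _ = ∑ n ∈ Ico (j:ℕ) (M-1-(j:ℕ)),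
              |(∑ t ∈ range (n+1), idcol (c:ℕ) t) - (∑ t ∈ range (n+1), ancol M (j:ℕ) t)| := by
            rw [Finset.sum_congr rfl heq, Finset.sum_const, Nat.card_Ico, nsmul_eq_mul,
              mul_one_div]
        _ ≤ _ := Finset.sum_le_sum_of_subset_of_nonneg hsub (fun n _ _ => abs_nonneg _)
    · have hsub : Ico (M-1-(j:ℕ)) (j:ℕ) ⊆ range M := by
        intro n hn
        rw [Finset.mem_Ico] at hn
        rw [Finset.mem_range]
        omega
      have heq : ∀ n ∈ Ico (M-1-(j:ℕ)) (j:ℕ),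
          |(∑ t ∈ range (n+1), idcol (c:ℕ) t) - (∑ t ∈ range (n+1), ancol M (j:ℕ) t)|
            = 1/2 := by
        intro n hn
        rw [Finset.mem_Ico] at hn
        rw [pre_id, pre_an M (j:ℕ) (n+1) hjM, if_neg (show ¬((j:ℕ) < n+1) by omega),
          if_pos (show M-1-(j:ℕ) < n+1 by omega)]
        by_cases hcn : (c:ℕ) < n+1
        · rw [if_pos hcn]; norm_num
        · rw [if_neg hcn]; norm_num
      have h0 : ((j:ℕ) - (M-1-(j:ℕ))) + M = 2*(j:ℕ) + 1 := by omega
      have h0' := congrArg (fun x : ℕ => (x:ℝ)) h0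
      push_cast at h0'
      have hjr : 2*(m:ℝ) ≤ ((j:ℕ):ℝ) := by exact_mod_cast hc1
      calc L ↑j = (((j:ℕ) - (M-1-(j:ℕ)) : ℕ):ℝ)/2 := by
            simp only [hL]
            rw [abs_of_nonpos (by rw [hMR]; linarith)]
            rw [hMR] at h0' ⊢
            linarith
        _ = ∑ n ∈ Ico (M-1-(j:ℕ)) (j:ℕ),
              |(∑ t ∈ range (n+1), idcol (c:ℕ) t) - (∑ t ∈ range (n+1), ancol M (j:ℕ) t)| := by
            rw [Finset.sum_congr rfl heq, Finset.sum_const, Nat.card_Ico, nsmul_eq_mul,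
              mul_one_div]
        _ ≤ _ := Finset.sum_le_sum_of_subset_of_nonneg hsub (fun n _ _ => abs_nonneg _)
  have hubcol : ∀ j : Fin M,
      emd (fun i => IDmat M i j) (fun i => ANmat M i j) = L (↑j) := by
    intro j
    rw [emd_eq_range _ _ (idcol (j:ℕ)) (ancol M (j:ℕ)) (id_match j) (an_match j)]
    have hjM : (j:ℕ) < M := j.isLt
    rcases Nat.lt_or_ge (j:ℕ) (2*m) with hc1 | hc1
    · have hf1 : ∀ n, 0 ≤ n → n < (j:ℕ) →
          |(∑ t ∈ range (n+1), idcol (j:ℕ) t) - (∑ t ∈ range (n+1), ancol M (j:ℕ) t)|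
            = 0*(n:ℝ)^2 + 0*(n:ℝ) + 0 := by
        intro n _ hn
        rw [pre_id, pre_an M (j:ℕ) (n+1) hjM, if_neg (show ¬((j:ℕ) < n+1) by omega),
          if_neg (show ¬(M-1-(j:ℕ) < n+1) by omega)]
        norm_num
      have hf2 : ∀ n, (j:ℕ) ≤ n → n < M-1-(j:ℕ) →
          |(∑ t ∈ range (n+1), idcol (j:ℕ) t) - (∑ t ∈ range (n+1), ancol M (j:ℕ) t)|
            = 0*(n:ℝ)^2 + 0*(n:ℝ) + 1/2 := by
        intro n hn1 hn2
        rw [pre_id, pre_an M (j:ℕ) (n+1) hjM, if_pos (show (j:ℕ) < n+1 by omega),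
          if_neg (show ¬(M-1-(j:ℕ) < n+1) by omega)]
        norm_num
      have hf3 : ∀ n, M-1-(j:ℕ) ≤ n → n < M →
          |(∑ t ∈ range (n+1), idcol (j:ℕ) t) - (∑ t ∈ range (n+1), ancol M (j:ℕ) t)|
            = 0*(n:ℝ)^2 + 0*(n:ℝ) + 0 := by
        intro n hn1 _
        rw [pre_id, pre_an M (j:ℕ) (n+1) hjM, if_pos (show (j:ℕ) < n+1 by omega),
          if_pos (show M-1-(j:ℕ) < n+1 by omega)]
        norm_num
      rw [range_split3 (j:ℕ) (M-1-(j:ℕ)) M (by omega) (by omega),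
        sum_piece 0 (j:ℕ) (by omega) _ 0 0 0 hf1,
        sum_piece (j:ℕ) (M-1-(j:ℕ)) (by omega) _ 0 0 (1/2) hf2,
        sum_piece (M-1-(j:ℕ)) M (by omega) _ 0 0 0 hf3]
      have h0 : (M-1-(j:ℕ)) + (j:ℕ) + 1 = M := by omega
      have h0' := congrArg (fun x : ℕ => (x:ℝ)) h0
      push_cast at h0'
      have hjr : ((j:ℕ):ℝ) + 1 ≤ 2*(m:ℝ) := by exact_mod_cast Nat.succ_le_of_lt hc1
      simp only [hL]
      rw [abs_of_nonneg (by rw [hMR]; linarith)]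
      push_cast
      rw [hMR] at h0' ⊢
      linarith
    · have hf1 : ∀ n, 0 ≤ n → n < M-1-(j:ℕ) →
          |(∑ t ∈ range (n+1), idcol (j:ℕ) t) - (∑ t ∈ range (n+1), ancol M (j:ℕ) t)|
            = 0*(n:ℝ)^2 + 0*(n:ℝ) + 0 := by
        intro n _ hn
        rw [pre_id, pre_an M (j:ℕ) (n+1) hjM, if_neg (show ¬((j:ℕ) < n+1) by omega),
          if_neg (show ¬(M-1-(j:ℕ) < n+1) by omega)]
        norm_num
      have hf2 : ∀ n, M-1-(j:ℕ) ≤ n → n < (j:ℕ) →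
          |(∑ t ∈ range (n+1), idcol (j:ℕ) t) - (∑ t ∈ range (n+1), ancol M (j:ℕ) t)|
            = 0*(n:ℝ)^2 + 0*(n:ℝ) + 1/2 := by
        intro n hn1 hn2
        rw [pre_id, pre_an M (j:ℕ) (n+1) hjM, if_neg (show ¬((j:ℕ) < n+1) by omega),
          if_pos (show M-1-(j:ℕ) < n+1 by omega)]
        norm_num
      have hf3 : ∀ n, (j:ℕ) ≤ n → n < M →
          |(∑ t ∈ range (n+1), idcol (j:ℕ) t) - (∑ t ∈ range (n+1), ancol M (j:ℕ) t)|
            = 0*(n:ℝ)^2 + 0*(n:ℝ) + 0 := by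
        intro n hn1 _
        rw [pre_id, pre_an M (j:ℕ) (n+1) hjM, if_pos (show (j:ℕ) < n+1 by omega),
          if_pos (show M-1-(j:ℕ) < n+1 by omega)]
        norm_num
      rw [range_split3 (M-1-(j:ℕ)) (j:ℕ) M (by omega) (by omega),
        sum_piece 0 (M-1-(j:ℕ)) (by omega) _ 0 0 0 hf1,
        sum_piece (M-1-(j:ℕ)) (j:ℕ) (by omega) _ 0 0 (1/2) hf2,
        sum_piece (j:ℕ) M (by omega) _ 0 0 0 hf3]
      have h0 : (M-1-(j:ℕ)) + (j:ℕ) + 1 = M := by omega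
      have h0' := congrArg (fun x : ℕ => (x:ℝ)) h0
      push_cast at h0'
      have hjr : 2*(m:ℝ) ≤ ((j:ℕ):ℝ) := by exact_mod_cast hc1
      simp only [hL]
      rw [abs_of_nonpos (by rw [hMR]; linarith)]
      push_cast
      rw [hMR] at h0' ⊢
      linarith
  have hsum : ∑ j : Fin M, L (↑j) = 4*(m:ℝ)^2 := by
    rw [Fin.sum_univ_eq_sum_range (fun jv => L jv) M]
    have hg1 : ∀ jv, 0 ≤ jv → jv < 2*m →
        L jv = 0*(jv:ℝ)^2 + (-1)*(jv:ℝ) + ((M:ℝ)-1)/2 := by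
      intro jv _ hv
      have hjr : ((jv:ℕ):ℝ) + 1 ≤ 2*(m:ℝ) := by exact_mod_cast Nat.succ_le_of_lt hv
      simp only [hL]
      rw [abs_of_nonneg (by rw [hMR]; linarith)]
      ring
    have hg2 : ∀ jv, 2*m ≤ jv → jv < M →
        L jv = 0*(jv:ℝ)^2 + 1*(jv:ℝ) + (1-(M:ℝ))/2 := by
      intro jv hv _
      have hjr : 2*(m:ℝ) ≤ ((jv:ℕ):ℝ) := by exact_mod_cast hv
      simp only [hL]
      rw [abs_of_nonpos (by rw [hMR]; linarith)]
      ring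
    rw [range_split (2*m) M (by omega),
      sum_piece 0 (2*m) (by omega) _ 0 (-1) (((M:ℝ)-1)/2) hg1,
      sum_piece (2*m) M (by omega) _ 0 1 ((1-(M:ℝ))/2) hg2, hMR]
    push_cast
    ring
  apply POS_eq_of_bounds
  · rw [Finset.sum_congr rfl (fun j _ => hubcol j)]
    exact hsum
  · intro σ
    rw [← hsum]
    have h1 : ∑ j : Fin M, L (↑j) = ∑ j : Fin M, L (↑(σ j)) :=
      (Equiv.sum_comp σ (fun j => L (↑j))).symm
    rw [h1]
    exact Finset.sum_le_sum (fun j _ => hlbcol j (σ j))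
lemma abs_eq_poly {x y : ℝ} (hy : 0 ≤ y) (h : x = y ∨ x = -y) : |x| = y := by
  rcases h with rfl | rfl
  · exact abs_of_nonneg hy
  · rw [abs_neg]; exact abs_of_nonneg hy

lemma ancol_symm (M jv : ℕ) (h : jv < M) : ancol M jv = ancol M (M-1-jv) := by
  funext t
  unfold ancol
  have h1 : (t = jv) ↔ (t + (M-1-jv) + 1 = M) := by omega
  have h2 : (t + jv + 1 = M) ↔ (t = M-1-jv) := by omega
  rw [if_congr h1 rfl rfl, if_congr h2 rfl rfl]
  ring

set_option maxHeartbeats 1000000 in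
lemma V5 (m : ℕ) (hm : 1 ≤ m) :
    POS (UNmat (4*m)) (ANmat (4*m)) = (8*(m:ℝ)^2-2)/3 := by
  set M := 4*m with hMdef
  have hMR : (M:ℝ) = 4*(m:ℝ) := by rw [hMdef]; push_cast; ring
  have hm0 : (m:ℝ) ≠ 0 := Nat.cast_ne_zero.mpr (by omega)
  have hm0' : (0:ℝ) < (m:ℝ) := Nat.cast_pos.mpr (by omega)
  set W : ℕ → ℝ :=
    fun jv => ((jv:ℝ)*((jv:ℝ)+1) + (2*(m:ℝ)-1-(jv:ℝ))*(2*(m:ℝ)-(jv:ℝ)))/(4*(m:ℝ)) with hW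
  have colA : ∀ (j : Fin M) (jv : ℕ), jv < 2*m →
      (∀ i : Fin M, ANmat M i j = ancol M jv (i:ℕ)) →
      emd (fun i => UNmat M i j) (fun i => ANmat M i j) = W jv := by
    intro j jv hjv hmatch
    rw [emd_eq_range _ _ (uncol M) (ancol M jv) (un_match j) hmatch]
    have hjvM : jv < M := by omega
    have hf1 : ∀ n, 0 ≤ n → n < jv →
        |(∑ t ∈ range (n+1), uncol M t) - (∑ t ∈ range (n+1), ancol M jv t)|
          = 0*(n:ℝ)^2 + (1/(4*(m:ℝ)))*(n:ℝ) + 1/(4*(m:ℝ)) := by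
      intro n _ hn
      rw [pre_un, pre_an M jv (n+1) hjvM, if_neg (show ¬(jv < n+1) by omega),
        if_neg (show ¬(M-1-jv < n+1) by omega)]
      refine abs_eq_poly ?_ (Or.inl (by push_cast; rw [hMR]; field_simp <;> ring))
      have he : 0*(n:ℝ)^2 + (1/(4*(m:ℝ)))*(n:ℝ) + 1/(4*(m:ℝ)) = ((n:ℝ)+1)/(4*m) := by
        field_simp <;> ring
      rw [he]
      positivity
    have hf2 : ∀ n, jv ≤ n → n < 2*m →
        |(∑ t ∈ range (n+1), uncol M t) - (∑ t ∈ range (n+1), ancol M jv t)|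
          = 0*(n:ℝ)^2 + (-(1/(4*(m:ℝ))))*(n:ℝ) + (1/2 - 1/(4*(m:ℝ))) := by
      intro n hn1 hn2
      rw [pre_un, pre_an M jv (n+1) hjvM, if_pos (show jv < n+1 by omega),
        if_neg (show ¬(M-1-jv < n+1) by omega)]
      refine abs_eq_poly ?_ (Or.inr (by push_cast; rw [hMR]; field_simp <;> ring))
      have hb : (n:ℝ)+1 ≤ 2*(m:ℝ) := by exact_mod_cast (show n+1 ≤ 2*m by omega)
      have he : 0*(n:ℝ)^2 + (-(1/(4*(m:ℝ))))*(n:ℝ) + (1/2 - 1/(4*(m:ℝ)))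
          = (2*(m:ℝ) - ((n:ℝ)+1))/(4*m) := by field_simp <;> ring
      rw [he]
      apply div_nonneg (by linarith) (by positivity)
    have hf3 : ∀ n, 2*m ≤ n → n < M-1-jv →
        |(∑ t ∈ range (n+1), uncol M t) - (∑ t ∈ range (n+1), ancol M jv t)|
          = 0*(n:ℝ)^2 + (1/(4*(m:ℝ)))*(n:ℝ) + (1/(4*(m:ℝ)) - 1/2) := by
      intro n hn1 hn2
      rw [pre_un, pre_an M jv (n+1) hjvM, if_pos (show jv < n+1 by omega),
        if_neg (show ¬(M-1-jv < n+1) by omega)]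
      refine abs_eq_poly ?_ (Or.inl (by push_cast; rw [hMR]; field_simp <;> ring))
      have hb : 2*(m:ℝ) ≤ (n:ℝ) := by exact_mod_cast hn1
      have he : 0*(n:ℝ)^2 + (1/(4*(m:ℝ)))*(n:ℝ) + (1/(4*(m:ℝ)) - 1/2)
          = (((n:ℝ)+1) - 2*(m:ℝ))/(4*m) := by field_simp <;> ring
      rw [he]
      apply div_nonneg (by linarith) (by positivity)
    have hf4 : ∀ n, M-1-jv ≤ n → n < M →
        |(∑ t ∈ range (n+1), uncol M t) - (∑ t ∈ range (n+1), ancol M jv t)|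
          = 0*(n:ℝ)^2 + (-(1/(4*(m:ℝ))))*(n:ℝ) + (1 - 1/(4*(m:ℝ))) := by
      intro n hn1 hn2
      rw [pre_un, pre_an M jv (n+1) hjvM, if_pos (show jv < n+1 by omega),
        if_pos (show M-1-jv < n+1 by omega)]
      refine abs_eq_poly ?_ (Or.inr (by push_cast; rw [hMR]; field_simp <;> ring))
      have hb : (n:ℝ)+1 ≤ 4*(m:ℝ) := by exact_mod_cast (show n+1 ≤ 4*m by omega)
      have he : 0*(n:ℝ)^2 + (-(1/(4*(m:ℝ))))*(n:ℝ) + (1 - 1/(4*(m:ℝ)))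
          = (4*(m:ℝ) - ((n:ℝ)+1))/(4*m) := by field_simp <;> ring
      rw [he]
      apply div_nonneg (by linarith) (by positivity)
    rw [range_split4 jv (2*m) (M-1-jv) M (by omega) (by omega) (by omega),
      sum_piece 0 jv (by omega) _ 0 (1/(4*(m:ℝ))) (1/(4*(m:ℝ))) hf1,
      sum_piece jv (2*m) (by omega) _ 0 (-(1/(4*(m:ℝ)))) (1/2 - 1/(4*(m:ℝ))) hf2,
      sum_piece (2*m) (M-1-jv) (by omega) _ 0 (1/(4*(m:ℝ))) (1/(4*(m:ℝ)) - 1/2) hf3,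
      sum_piece (M-1-jv) M (by omega) _ 0 (-(1/(4*(m:ℝ)))) (1 - 1/(4*(m:ℝ))) hf4]
    have hc : ((M-1-jv:ℕ):ℝ) = 4*(m:ℝ)-1-(jv:ℝ) := by
      have h0 : (M-1-jv) + jv + 1 = M := by omega
      have h0' := congrArg (fun x : ℕ => (x:ℝ)) h0
      push_cast at h0'
      linarith [hMR ▸ h0']
    simp only [hW]
    rw [hc, hMR]
    push_cast
    field_simp
    ring
  apply POS_eq_of_const
  intro σ
  have hre : (fun j : Fin M => emd (fun i => UNmat M i j) (fun i => ANmat M i (σ j)))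
      = (fun j : Fin M =>
          (fun j' : Fin M => emd (fun i => UNmat M i j') (fun i => ANmat M i j')) (σ j)) := rfl
  rw [hre, Equiv.sum_comp σ
    (fun j' : Fin M => emd (fun i => UNmat M i j') (fun i => ANmat M i j'))]
  have hgj : ∀ j : Fin M, emd (fun i => UNmat M i j) (fun i => ANmat M i j)
      = (if (j:ℕ) < 2*m then W (j:ℕ) else W (M-1-(j:ℕ))) := by
    intro j
    by_cases hc : (j:ℕ) < 2*m
    · rw [if_pos hc]
      exact colA j (j:ℕ) hc (an_match j)
    · rw [if_neg hc]
      refine colA j (M-1-(j:ℕ)) (by have := j.isLt; omega) ?_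
      intro i
      rw [an_match j i, ancol_symm M (j:ℕ) j.isLt]
  rw [Finset.sum_congr rfl (fun j _ => hgj j),
    Fin.sum_univ_eq_sum_range (fun jv => if jv < 2*m then W jv else W (M-1-jv)) M]
  have hg1 : ∀ jv, 0 ≤ jv → jv < 2*m →
      (if jv < 2*m then W jv else W (M-1-jv))
        = (1/(2*(m:ℝ)))*(jv:ℝ)^2 + ((2-4*(m:ℝ))/(4*(m:ℝ)))*(jv:ℝ) + ((m:ℝ) - 1/2) := by
    intro jv _ hv
    rw [if_pos hv]
    simp only [hW]
    field_simp
    ring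
  have hg2 : ∀ jv, 2*m ≤ jv → jv < M →
      (if jv < 2*m then W jv else W (M-1-jv))
        = (1/(2*(m:ℝ)))*(jv:ℝ)^2 + ((2-12*(m:ℝ))/(4*(m:ℝ)))*(jv:ℝ) + (5*(m:ℝ) - 3/2) := by
    intro jv hv1 hv2
    rw [if_neg (by omega)]
    have hc : ((M-1-jv:ℕ):ℝ) = 4*(m:ℝ)-1-(jv:ℝ) := by
      have h0 : (M-1-jv) + jv + 1 = M := by omega
      have h0' := congrArg (fun x : ℕ => (x:ℝ)) h0
      push_cast at h0'
      linarith [hMR ▸ h0']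
    simp only [hW]
    rw [hc]
    field_simp
    ring
  rw [range_split (2*m) M (by omega),
    sum_piece 0 (2*m) (by omega) _ (1/(2*(m:ℝ))) ((2-4*(m:ℝ))/(4*(m:ℝ))) ((m:ℝ) - 1/2) hg1,
    sum_piece (2*m) M (by omega) _ (1/(2*(m:ℝ))) ((2-12*(m:ℝ))/(4*(m:ℝ))) (5*(m:ℝ) - 3/2) hg2,
    hMR]
  push_cast
  field_simp
  ring
set_option maxHeartbeats 1000000 in
lemma V4 (m : ℕ) (hm : 1 ≤ m) :
    POS (IDmat (4*m)) (STmat (4*m)) = (8*(m:ℝ)^2-2)/3 := by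
  set M := 4*m with hMdef
  have hM2 : M/2 = 2*m := by omega
  have hMR : (M:ℝ) = 4*(m:ℝ) := by rw [hMdef]; push_cast; ring
  have hm0 : (m:ℝ) ≠ 0 := Nat.cast_ne_zero.mpr (by omega)
  have hm0' : (0:ℝ) < (m:ℝ) := Nat.cast_pos.mpr (by omega)
  set CL : ℕ → ℝ := fun i => if i < 2*m then
      (i:ℝ)*((i:ℝ)+1)/(2*(m:ℝ)) + (m:ℝ) - (i:ℝ) - 1/2
    else (m:ℝ) + 1/2 + (i:ℝ) - 2*(m:ℝ) with hCL
  set CR : ℕ → ℝ := fun i => if i < 2*m then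
      2*(m:ℝ) - (i:ℝ) + (2*(m:ℝ)-1)/2
    else ((i:ℝ)-2*(m:ℝ))*((i:ℝ)-2*(m:ℝ)+1)/(2*(m:ℝ)) + (m:ℝ) - ((i:ℝ)-2*(m:ℝ)) - 1/2
    with hCR
  have colL : ∀ (j y : Fin M), (y:ℕ) < M/2 →
      emd (fun i => IDmat M i j) (fun i => STmat M i y) = CL (j:ℕ) := by
    intro j y hy
    rw [emd_eq_range _ _ (idcol (j:ℕ)) (stcolL M) (id_match j) (st_matchL y hy)]
    rcases Nat.lt_or_ge (j:ℕ) (2*m) with hc | hc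
    · have hf1 : ∀ n, 0 ≤ n → n < (j:ℕ) →
          |(∑ t ∈ range (n+1), idcol (j:ℕ) t) - (∑ t ∈ range (n+1), stcolL M t)|
            = 0*(n:ℝ)^2 + (1/(2*(m:ℝ)))*(n:ℝ) + 1/(2*(m:ℝ)) := by
        intro n _ hn
        rw [pre_id, pre_L, hM2, if_neg (show ¬((j:ℕ) < n+1) by omega),
          if_pos (show n+1 ≤ 2*m by omega)]
        refine abs_eq_poly ?_ (Or.inr (by push_cast; rw [hMR]; field_simp <;> ring))
        have he : 0*(n:ℝ)^2 + (1/(2*(m:ℝ)))*(n:ℝ) + 1/(2*(m:ℝ)) = ((n:ℝ)+1)/(2*m) := by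
          field_simp <;> ring
        rw [he]; positivity
      have hf2 : ∀ n, (j:ℕ) ≤ n → n < 2*m →
          |(∑ t ∈ range (n+1), idcol (j:ℕ) t) - (∑ t ∈ range (n+1), stcolL M t)|
            = 0*(n:ℝ)^2 + (-(1/(2*(m:ℝ))))*(n:ℝ) + (1 - 1/(2*(m:ℝ))) := by
        intro n hn1 hn2
        rw [pre_id, pre_L, hM2, if_pos (show (j:ℕ) < n+1 by omega),
          if_pos (show n+1 ≤ 2*m by omega)]
        refine abs_eq_poly ?_ (Or.inl (by push_cast; rw [hMR]; field_simp <;> ring))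
        have hb : (n:ℝ)+1 ≤ 2*(m:ℝ) := by exact_mod_cast (show n+1 ≤ 2*m by omega)
        have he : 0*(n:ℝ)^2 + (-(1/(2*(m:ℝ))))*(n:ℝ) + (1 - 1/(2*(m:ℝ)))
            = (2*(m:ℝ) - ((n:ℝ)+1))/(2*m) := by field_simp <;> ring
        rw [he]; exact div_nonneg (by linarith) (by positivity)
      have hf3 : ∀ n, 2*m ≤ n → n < M →
          |(∑ t ∈ range (n+1), idcol (j:ℕ) t) - (∑ t ∈ range (n+1), stcolL M t)|
            = 0*(n:ℝ)^2 + 0*(n:ℝ) + 0 := by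
        intro n hn1 _
        rw [pre_id, pre_L, hM2, if_pos (show (j:ℕ) < n+1 by omega),
          if_neg (show ¬(n+1 ≤ 2*m) by omega)]
        refine abs_eq_poly (by norm_num) (Or.inl (by push_cast; rw [hMR]; field_simp <;> ring))
      rw [range_split3 (j:ℕ) (2*m) M (by omega) (by omega),
        sum_piece 0 (j:ℕ) (by omega) _ 0 (1/(2*(m:ℝ))) (1/(2*(m:ℝ))) hf1,
        sum_piece (j:ℕ) (2*m) (by omega) _ 0 (-(1/(2*(m:ℝ)))) (1 - 1/(2*(m:ℝ))) hf2,
        sum_piece (2*m) M (by omega) _ 0 0 0 hf3]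
      simp only [hCL]
      rw [if_pos hc, hMR]
      push_cast
      field_simp <;> ring
    · have hf1 : ∀ n, 0 ≤ n → n < 2*m →
          |(∑ t ∈ range (n+1), idcol (j:ℕ) t) - (∑ t ∈ range (n+1), stcolL M t)|
            = 0*(n:ℝ)^2 + (1/(2*(m:ℝ)))*(n:ℝ) + 1/(2*(m:ℝ)) := by
        intro n _ hn
        rw [pre_id, pre_L, hM2, if_neg (show ¬((j:ℕ) < n+1) by omega),
          if_pos (show n+1 ≤ 2*m by omega)]
        refine abs_eq_poly ?_ (Or.inr (by push_cast; rw [hMR]; field_simp <;> ring))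
        have he : 0*(n:ℝ)^2 + (1/(2*(m:ℝ)))*(n:ℝ) + 1/(2*(m:ℝ)) = ((n:ℝ)+1)/(2*m) := by
          field_simp <;> ring
        rw [he]; positivity
      have hf2 : ∀ n, 2*m ≤ n → n < (j:ℕ) →
          |(∑ t ∈ range (n+1), idcol (j:ℕ) t) - (∑ t ∈ range (n+1), stcolL M t)|
            = 0*(n:ℝ)^2 + 0*(n:ℝ) + 1 := by
        intro n hn1 hn2
        rw [pre_id, pre_L, hM2, if_neg (show ¬((j:ℕ) < n+1) by omega),
          if_neg (show ¬(n+1 ≤ 2*m) by omega)]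
        refine abs_eq_poly (by norm_num) (Or.inr (by push_cast; rw [hMR]; field_simp <;> ring))
      have hf3 : ∀ n, (j:ℕ) ≤ n → n < M →
          |(∑ t ∈ range (n+1), idcol (j:ℕ) t) - (∑ t ∈ range (n+1), stcolL M t)|
            = 0*(n:ℝ)^2 + 0*(n:ℝ) + 0 := by
        intro n hn1 _
        rw [pre_id, pre_L, hM2, if_pos (show (j:ℕ) < n+1 by omega),
          if_neg (show ¬(n+1 ≤ 2*m) by omega)]
        refine abs_eq_poly (by norm_num) (Or.inl (by push_cast; rw [hMR]; field_simp <;> ring))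
      rw [range_split3 (2*m) (j:ℕ) M (by omega) (by have := j.isLt; omega),
        sum_piece 0 (2*m) (by omega) _ 0 (1/(2*(m:ℝ))) (1/(2*(m:ℝ))) hf1,
        sum_piece (2*m) (j:ℕ) (by omega) _ 0 0 1 hf2,
        sum_piece (j:ℕ) M (by have := j.isLt; omega) _ 0 0 0 hf3]
      simp only [hCL]
      rw [if_neg (by omega), hMR]
      push_cast
      field_simp <;> ring
  have colR : ∀ (j y : Fin M), ¬((y:ℕ) < M/2) →
      emd (fun i => IDmat M i j) (fun i => STmat M i y) = CR (j:ℕ) := by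
    intro j y hy
    rw [emd_eq_range _ _ (idcol (j:ℕ)) (stcolR M) (id_match j) (st_matchR y hy)]
    rcases Nat.lt_or_ge (j:ℕ) (2*m) with hc | hc
    · have hf1 : ∀ n, 0 ≤ n → n < (j:ℕ) →
          |(∑ t ∈ range (n+1), idcol (j:ℕ) t) - (∑ t ∈ range (n+1), stcolR M t)|
            = 0*(n:ℝ)^2 + 0*(n:ℝ) + 0 := by
        intro n _ hn
        rw [pre_id, pre_R, hM2, if_neg (show ¬((j:ℕ) < n+1) by omega),
          if_pos (show n+1 ≤ 2*m by omega)]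
        refine abs_eq_poly (by norm_num) (Or.inl (by norm_num))
      have hf2 : ∀ n, (j:ℕ) ≤ n → n < 2*m →
          |(∑ t ∈ range (n+1), idcol (j:ℕ) t) - (∑ t ∈ range (n+1), stcolR M t)|
            = 0*(n:ℝ)^2 + 0*(n:ℝ) + 1 := by
        intro n hn1 hn2
        rw [pre_id, pre_R, hM2, if_pos (show (j:ℕ) < n+1 by omega),
          if_pos (show n+1 ≤ 2*m by omega)]
        refine abs_eq_poly (by norm_num) (Or.inl (by norm_num))
      have hf3 : ∀ n, 2*m ≤ n → n < M →
          |(∑ t ∈ range (n+1), idcol (j:ℕ) t) - (∑ t ∈ range (n+1), stcolR M t)|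
            = 0*(n:ℝ)^2 + (-(1/(2*(m:ℝ))))*(n:ℝ) + (2 - 1/(2*(m:ℝ))) := by
        intro n hn1 hn2
        rw [pre_id, pre_R, hM2, if_pos (show (j:ℕ) < n+1 by omega),
          if_neg (show ¬(n+1 ≤ 2*m) by omega)]
        refine abs_eq_poly ?_ (Or.inl (by push_cast; rw [hMR]; field_simp <;> ring))
        have hb : (n:ℝ)+1 ≤ 4*(m:ℝ) := by exact_mod_cast (show n+1 ≤ 4*m by omega)
        have he : 0*(n:ℝ)^2 + (-(1/(2*(m:ℝ))))*(n:ℝ) + (2 - 1/(2*(m:ℝ)))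
            = (4*(m:ℝ) - ((n:ℝ)+1))/(2*m) := by field_simp <;> ring
        rw [he]; exact div_nonneg (by linarith) (by positivity)
      rw [range_split3 (j:ℕ) (2*m) M (by omega) (by omega),
        sum_piece 0 (j:ℕ) (by omega) _ 0 0 0 hf1,
        sum_piece (j:ℕ) (2*m) (by omega) _ 0 0 1 hf2,
        sum_piece (2*m) M (by omega) _ 0 (-(1/(2*(m:ℝ)))) (2 - 1/(2*(m:ℝ))) hf3]
      simp only [hCR]
      rw [if_pos hc, hMR]
      push_cast
      field_simp <;> ring
    · have hf1 : ∀ n, 0 ≤ n → n < 2*m →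
          |(∑ t ∈ range (n+1), idcol (j:ℕ) t) - (∑ t ∈ range (n+1), stcolR M t)|
            = 0*(n:ℝ)^2 + 0*(n:ℝ) + 0 := by
        intro n _ hn
        rw [pre_id, pre_R, hM2, if_neg (show ¬((j:ℕ) < n+1) by omega),
          if_pos (show n+1 ≤ 2*m by omega)]
        refine abs_eq_poly (by norm_num) (Or.inl (by norm_num))
      have hf2 : ∀ n, 2*m ≤ n → n < (j:ℕ) →
          |(∑ t ∈ range (n+1), idcol (j:ℕ) t) - (∑ t ∈ range (n+1), stcolR M t)|
            = 0*(n:ℝ)^2 + (1/(2*(m:ℝ)))*(n:ℝ) + (1/(2*(m:ℝ)) - 1) := by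
        intro n hn1 hn2
        rw [pre_id, pre_R, hM2, if_neg (show ¬((j:ℕ) < n+1) by omega),
          if_neg (show ¬(n+1 ≤ 2*m) by omega)]
        refine abs_eq_poly ?_ (Or.inr (by push_cast; rw [hMR]; field_simp <;> ring))
        have hb : 2*(m:ℝ) ≤ (n:ℝ) := by exact_mod_cast hn1
        have he : 0*(n:ℝ)^2 + (1/(2*(m:ℝ)))*(n:ℝ) + (1/(2*(m:ℝ)) - 1)
            = (((n:ℝ)+1) - 2*(m:ℝ))/(2*m) := by field_simp <;> ring
        rw [he]; exact div_nonneg (by linarith) (by positivity)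
      have hf3 : ∀ n, (j:ℕ) ≤ n → n < M →
          |(∑ t ∈ range (n+1), idcol (j:ℕ) t) - (∑ t ∈ range (n+1), stcolR M t)|
            = 0*(n:ℝ)^2 + (-(1/(2*(m:ℝ))))*(n:ℝ) + (2 - 1/(2*(m:ℝ))) := by
        intro n hn1 hn2
        rw [pre_id, pre_R, hM2, if_pos (show (j:ℕ) < n+1 by omega),
          if_neg (show ¬(n+1 ≤ 2*m) by omega)]
        refine abs_eq_poly ?_ (Or.inl (by push_cast; rw [hMR]; field_simp <;> ring))
        have hb : (n:ℝ)+1 ≤ 4*(m:ℝ) := by exact_mod_cast (show n+1 ≤ 4*m by omega)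
        have he : 0*(n:ℝ)^2 + (-(1/(2*(m:ℝ))))*(n:ℝ) + (2 - 1/(2*(m:ℝ)))
            = (4*(m:ℝ) - ((n:ℝ)+1))/(2*m) := by field_simp <;> ring
        rw [he]; exact div_nonneg (by linarith) (by positivity)
      rw [range_split3 (2*m) (j:ℕ) M (by omega) (by have := j.isLt; omega),
        sum_piece 0 (2*m) (by omega) _ 0 0 0 hf1,
        sum_piece (2*m) (j:ℕ) (by omega) _ 0 (1/(2*(m:ℝ))) (1/(2*(m:ℝ)) - 1) hf2,
        sum_piece (j:ℕ) M (by have := j.isLt; omega) _ 0 (-(1/(2*(m:ℝ)))) (2 - 1/(2*(m:ℝ))) hf3]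
      simp only [hCR]
      rw [if_neg (by omega), hMR]
      push_cast
      field_simp <;> ring
  -- min inequalities
  have hLR1 : ∀ i : ℕ, i < 2*m → CL i ≤ CR i := by
    intro i hi
    have hb : (i:ℝ)+1 ≤ 2*(m:ℝ) := by exact_mod_cast (show i+1 ≤ 2*m by omega)
    have hb0 : (0:ℝ) ≤ (i:ℝ) := Nat.cast_nonneg i
    have key : CR i - CL i = (4*(m:ℝ)^2 - (i:ℝ)*((i:ℝ)+1))/(2*(m:ℝ)) := by
      simp only [hCL, hCR]
      rw [if_pos hi, if_pos hi]
      field_simp <;> ring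
    nlinarith [div_nonneg (show (0:ℝ) ≤ 4*(m:ℝ)^2 - (i:ℝ)*((i:ℝ)+1) by nlinarith)
      (show (0:ℝ) ≤ 2*(m:ℝ) by positivity), key]
  have hLR2 : ∀ i : ℕ, 2*m ≤ i → i < M → CR i ≤ CL i := by
    intro i hi1 hi2
    have hb : (i:ℝ)+1 ≤ 4*(m:ℝ) := by exact_mod_cast (show i+1 ≤ 4*m by omega)
    have hb2 : 2*(m:ℝ) ≤ (i:ℝ) := by exact_mod_cast hi1
    have key : CL i - CR i = ((2*(i:ℝ)-4*(m:ℝ)+1)*(2*(m:ℝ)) - ((i:ℝ)-2*(m:ℝ))*((i:ℝ)-2*(m:ℝ)+1))/(2*(m:ℝ)) := by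
      simp only [hCL, hCR]
      rw [if_neg (by omega), if_neg (by omega)]
      field_simp <;> ring
    nlinarith [div_nonneg (show (0:ℝ) ≤ (2*(i:ℝ)-4*(m:ℝ)+1)*(2*(m:ℝ)) - ((i:ℝ)-2*(m:ℝ))*((i:ℝ)-2*(m:ℝ)+1) by nlinarith)
      (show (0:ℝ) ≤ 2*(m:ℝ) by positivity), key]
  -- the common sum
  have hsum : ∑ j : Fin M, (if (j:ℕ) < 2*m then CL (j:ℕ) else CR (j:ℕ)) = (8*(m:ℝ)^2-2)/3 := by
    rw [Fin.sum_univ_eq_sum_range (fun jv => if jv < 2*m then CL jv else CR jv) M]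
    have hg1 : ∀ jv, 0 ≤ jv → jv < 2*m →
        (if jv < 2*m then CL jv else CR jv)
          = (1/(2*(m:ℝ)))*(jv:ℝ)^2 + (1/(2*(m:ℝ)) - 1)*(jv:ℝ) + ((m:ℝ) - 1/2) := by
      intro jv _ hv
      rw [if_pos hv]
      simp only [hCL]
      rw [if_pos hv]
      field_simp <;> ring
    have hg2 : ∀ jv, 2*m ≤ jv → jv < M →
        (if jv < 2*m then CL jv else CR jv)
          = (1/(2*(m:ℝ)))*(jv:ℝ)^2 + ((1-4*(m:ℝ))/(2*(m:ℝ)) - 1)*(jv:ℝ) + (5*(m:ℝ) - 3/2) := by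
      intro jv hv1 hv2
      rw [if_neg (by omega)]
      simp only [hCR]
      rw [if_neg (by omega)]
      field_simp <;> ring
    rw [range_split (2*m) M (by omega),
      sum_piece 0 (2*m) (by omega) _ (1/(2*(m:ℝ))) (1/(2*(m:ℝ)) - 1) ((m:ℝ) - 1/2) hg1,
      sum_piece (2*m) M (by omega) _ (1/(2*(m:ℝ))) ((1-4*(m:ℝ))/(2*(m:ℝ)) - 1) (5*(m:ℝ) - 3/2) hg2,
      hMR]
    push_cast
    field_simp <;> ring
  apply POS_eq_of_bounds
  · rw [← hsum]
    refine Finset.sum_congr rfl fun j _ => ?_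
    by_cases hc : (j:ℕ) < 2*m
    · rw [if_pos hc]
      exact colL j j (by omega)
    · rw [if_neg hc]
      exact colR j j (by omega)
  · intro σ
    rw [← hsum]
    refine Finset.sum_le_sum fun j _ => ?_
    by_cases hs : ((σ j : Fin M):ℕ) < M/2
    · rw [colL j (σ j) hs]
      by_cases hc : (j:ℕ) < 2*m
      · rw [if_pos hc]
      · rw [if_neg hc]
        exact hLR2 (j:ℕ) (by omega) j.isLt
    · rw [colR j (σ j) hs]
      by_cases hc : (j:ℕ) < 2*m
      · rw [if_pos hc]
        exact hLR1 (j:ℕ) hc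
      · rw [if_neg hc]
lemma range_split5 (b c d e M : ℕ) (h1 : b ≤ c) (h2 : c ≤ d) (h3 : d ≤ e) (h4 : e ≤ M)
    (f : ℕ → ℝ) :
    ∑ k ∈ range M, f k = ∑ k ∈ Ico 0 b, f k + ∑ k ∈ Ico b c, f k + ∑ k ∈ Ico c d, f k
      + ∑ k ∈ Ico d e, f k + ∑ k ∈ Ico e M, f k := by
  rw [Finset.sum_Ico_consecutive _ (Nat.zero_le b) h1,
    Finset.sum_Ico_consecutive _ (Nat.zero_le c) h2,
    Finset.sum_Ico_consecutive _ (Nat.zero_le d) h3,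
    Finset.sum_Ico_consecutive _ (Nat.zero_le e) h4, ← range_eq_Ico]

set_option maxHeartbeats 2000000 in
lemma V6 (m : ℕ) (hm : 1 ≤ m) :
    POS (ANmat (4*m)) (STmat (4*m)) = (13*(m:ℝ)^2-1)/3 := by
  set M := 4*m with hMdef
  have hM2 : M/2 = 2*m := by omega
  have hMR : (M:ℝ) = 4*(m:ℝ) := by rw [hMdef]; push_cast; ring
  have hm0 : (m:ℝ) ≠ 0 := Nat.cast_ne_zero.mpr (by omega)
  have hm0' : (0:ℝ) < (m:ℝ) := Nat.cast_pos.mpr (by omega)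
  set C6 : ℕ → ℝ := fun jv => if jv < m then
      (2*(jv:ℝ)^2 + (2-2*(m:ℝ))*(jv:ℝ) + 2*(m:ℝ)^2)/(4*(m:ℝ)) + (2*(m:ℝ)-1-(jv:ℝ))/2
    else (m:ℝ) with hC6
  have castc : ∀ jv : ℕ, jv < M → ((M-1-jv:ℕ):ℝ) = 4*(m:ℝ)-1-(jv:ℝ) := by
    intro jv hjv
    have h0 : (M-1-jv) + jv + 1 = M := by omega
    have h0' := congrArg (fun x : ℕ => (x:ℝ)) h0
    push_cast at h0'
    linarith [hMR ▸ h0']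
  have hL6 : ∀ (j y : Fin M) (jv : ℕ), jv < 2*m →
      (∀ i : Fin M, ANmat M i j = ancol M jv (i:ℕ)) → (y:ℕ) < M/2 →
      emd (fun i => ANmat M i j) (fun i => STmat M i y) = C6 jv := by
    intro j y jv hjv hmatch hy
    rw [emd_eq_range _ _ (ancol M jv) (stcolL M) hmatch (st_matchL y hy)]
    have hjvM : jv < M := by omega
    rcases Nat.lt_or_ge jv m with hcm | hcm
    · have hf1 : ∀ n, 0 ≤ n → n < jv →
          |(∑ t ∈ range (n+1), ancol M jv t) - (∑ t ∈ range (n+1), stcolL M t)|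
            = 0*(n:ℝ)^2 + (1/(2*(m:ℝ)))*(n:ℝ) + 1/(2*(m:ℝ)) := by
        intro n _ hn
        rw [pre_an M jv (n+1) hjvM, pre_L, hM2, if_neg (show ¬(jv < n+1) by omega),
          if_neg (show ¬(M-1-jv < n+1) by omega), if_pos (show n+1 ≤ 2*m by omega)]
        refine abs_eq_poly ?_ (Or.inr (by push_cast; rw [hMR]; field_simp <;> ring))
        have he : 0*(n:ℝ)^2 + (1/(2*(m:ℝ)))*(n:ℝ) + 1/(2*(m:ℝ)) = ((n:ℝ)+1)/(2*m) := by
          field_simp <;> ring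
        rw [he]; positivity
      have hf2 : ∀ n, jv ≤ n → n < m →
          |(∑ t ∈ range (n+1), ancol M jv t) - (∑ t ∈ range (n+1), stcolL M t)|
            = 0*(n:ℝ)^2 + (-(1/(2*(m:ℝ))))*(n:ℝ) + (1/2 - 1/(2*(m:ℝ))) := by
        intro n hn1 hn2
        rw [pre_an M jv (n+1) hjvM, pre_L, hM2, if_pos (show jv < n+1 by omega),
          if_neg (show ¬(M-1-jv < n+1) by omega), if_pos (show n+1 ≤ 2*m by omega)]
        refine abs_eq_poly ?_ (Or.inl (by push_cast; rw [hMR]; field_simp <;> ring))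
        have hb : (n:ℝ)+1 ≤ (m:ℝ) := by exact_mod_cast (show n+1 ≤ m by omega)
        have he : 0*(n:ℝ)^2 + (-(1/(2*(m:ℝ))))*(n:ℝ) + (1/2 - 1/(2*(m:ℝ)))
            = ((m:ℝ) - ((n:ℝ)+1))/(2*m) := by field_simp <;> ring
        rw [he]; exact div_nonneg (by linarith) (by positivity)
      have hf3 : ∀ n, m ≤ n → n < 2*m →
          |(∑ t ∈ range (n+1), ancol M jv t) - (∑ t ∈ range (n+1), stcolL M t)|
            = 0*(n:ℝ)^2 + (1/(2*(m:ℝ)))*(n:ℝ) + (1/(2*(m:ℝ)) - 1/2) := by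
        intro n hn1 hn2
        rw [pre_an M jv (n+1) hjvM, pre_L, hM2, if_pos (show jv < n+1 by omega),
          if_neg (show ¬(M-1-jv < n+1) by omega), if_pos (show n+1 ≤ 2*m by omega)]
        refine abs_eq_poly ?_ (Or.inr (by push_cast; rw [hMR]; field_simp <;> ring))
        have hb : (m:ℝ) ≤ (n:ℝ) := by exact_mod_cast hn1
        have he : 0*(n:ℝ)^2 + (1/(2*(m:ℝ)))*(n:ℝ) + (1/(2*(m:ℝ)) - 1/2)
            = (((n:ℝ)+1) - (m:ℝ))/(2*m) := by field_simp <;> ring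
        rw [he]; exact div_nonneg (by linarith) (by positivity)
      have hf4 : ∀ n, 2*m ≤ n → n < M-1-jv →
          |(∑ t ∈ range (n+1), ancol M jv t) - (∑ t ∈ range (n+1), stcolL M t)|
            = 0*(n:ℝ)^2 + 0*(n:ℝ) + 1/2 := by
        intro n hn1 hn2
        rw [pre_an M jv (n+1) hjvM, pre_L, hM2, if_pos (show jv < n+1 by omega),
          if_neg (show ¬(M-1-jv < n+1) by omega), if_neg (show ¬(n+1 ≤ 2*m) by omega)]
        refine abs_eq_poly (by norm_num) (Or.inr (by push_cast; rw [hMR]; field_simp <;> ring))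
      have hf5 : ∀ n, M-1-jv ≤ n → n < M →
          |(∑ t ∈ range (n+1), ancol M jv t) - (∑ t ∈ range (n+1), stcolL M t)|
            = 0*(n:ℝ)^2 + 0*(n:ℝ) + 0 := by
        intro n hn1 hn2
        rw [pre_an M jv (n+1) hjvM, pre_L, hM2, if_pos (show jv < n+1 by omega),
          if_pos (show M-1-jv < n+1 by omega), if_neg (show ¬(n+1 ≤ 2*m) by omega)]
        refine abs_eq_poly (by norm_num) (Or.inl (by push_cast; rw [hMR]; field_simp <;> ring))
      rw [range_split5 jv m (2*m) (M-1-jv) M (by omega) (by omega) (by omega) (by omega),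
        sum_piece 0 jv (by omega) _ 0 (1/(2*(m:ℝ))) (1/(2*(m:ℝ))) hf1,
        sum_piece jv m (by omega) _ 0 (-(1/(2*(m:ℝ)))) (1/2 - 1/(2*(m:ℝ))) hf2,
        sum_piece m (2*m) (by omega) _ 0 (1/(2*(m:ℝ))) (1/(2*(m:ℝ)) - 1/2) hf3,
        sum_piece (2*m) (M-1-jv) (by omega) _ 0 0 (1/2) hf4,
        sum_piece (M-1-jv) M (by omega) _ 0 0 0 hf5]
      simp only [hC6]
      rw [if_pos hcm, castc jv hjvM, hMR]
      push_cast
      field_simp <;> ring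
    · have hf1 : ∀ n, 0 ≤ n → n < jv →
          |(∑ t ∈ range (n+1), ancol M jv t) - (∑ t ∈ range (n+1), stcolL M t)|
            = 0*(n:ℝ)^2 + (1/(2*(m:ℝ)))*(n:ℝ) + 1/(2*(m:ℝ)) := by
        intro n _ hn
        rw [pre_an M jv (n+1) hjvM, pre_L, hM2, if_neg (show ¬(jv < n+1) by omega),
          if_neg (show ¬(M-1-jv < n+1) by omega), if_pos (show n+1 ≤ 2*m by omega)]
        refine abs_eq_poly ?_ (Or.inr (by push_cast; rw [hMR]; field_simp <;> ring))
        have he : 0*(n:ℝ)^2 + (1/(2*(m:ℝ)))*(n:ℝ) + 1/(2*(m:ℝ)) = ((n:ℝ)+1)/(2*m) := by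
          field_simp <;> ring
        rw [he]; positivity
      have hf2 : ∀ n, jv ≤ n → n < 2*m →
          |(∑ t ∈ range (n+1), ancol M jv t) - (∑ t ∈ range (n+1), stcolL M t)|
            = 0*(n:ℝ)^2 + (1/(2*(m:ℝ)))*(n:ℝ) + (1/(2*(m:ℝ)) - 1/2) := by
        intro n hn1 hn2
        rw [pre_an M jv (n+1) hjvM, pre_L, hM2, if_pos (show jv < n+1 by omega),
          if_neg (show ¬(M-1-jv < n+1) by omega), if_pos (show n+1 ≤ 2*m by omega)]
        refine abs_eq_poly ?_ (Or.inr (by push_cast; rw [hMR]; field_simp <;> ring))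
        have hb : (m:ℝ) ≤ (n:ℝ) := by exact_mod_cast (show m ≤ n by omega)
        have he : 0*(n:ℝ)^2 + (1/(2*(m:ℝ)))*(n:ℝ) + (1/(2*(m:ℝ)) - 1/2)
            = (((n:ℝ)+1) - (m:ℝ))/(2*m) := by field_simp <;> ring
        rw [he]; exact div_nonneg (by linarith) (by positivity)
      have hf4 : ∀ n, 2*m ≤ n → n < M-1-jv →
          |(∑ t ∈ range (n+1), ancol M jv t) - (∑ t ∈ range (n+1), stcolL M t)|
            = 0*(n:ℝ)^2 + 0*(n:ℝ) + 1/2 := by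
        intro n hn1 hn2
        rw [pre_an M jv (n+1) hjvM, pre_L, hM2, if_pos (show jv < n+1 by omega),
          if_neg (show ¬(M-1-jv < n+1) by omega), if_neg (show ¬(n+1 ≤ 2*m) by omega)]
        refine abs_eq_poly (by norm_num) (Or.inr (by push_cast; rw [hMR]; field_simp <;> ring))
      have hf5 : ∀ n, M-1-jv ≤ n → n < M →
          |(∑ t ∈ range (n+1), ancol M jv t) - (∑ t ∈ range (n+1), stcolL M t)|
            = 0*(n:ℝ)^2 + 0*(n:ℝ) + 0 := by
        intro n hn1 hn2
        rw [pre_an M jv (n+1) hjvM, pre_L, hM2, if_pos (show jv < n+1 by omega),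
          if_pos (show M-1-jv < n+1 by omega), if_neg (show ¬(n+1 ≤ 2*m) by omega)]
        refine abs_eq_poly (by norm_num) (Or.inl (by push_cast; rw [hMR]; field_simp <;> ring))
      rw [range_split4 jv (2*m) (M-1-jv) M (by omega) (by omega) (by omega),
        sum_piece 0 jv (by omega) _ 0 (1/(2*(m:ℝ))) (1/(2*(m:ℝ))) hf1,
        sum_piece jv (2*m) (by omega) _ 0 (1/(2*(m:ℝ))) (1/(2*(m:ℝ)) - 1/2) hf2,
        sum_piece (2*m) (M-1-jv) (by omega) _ 0 0 (1/2) hf4,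
        sum_piece (M-1-jv) M (by omega) _ 0 0 0 hf5]
      simp only [hC6]
      rw [if_neg (by omega), castc jv hjvM, hMR]
      push_cast
      field_simp <;> ring
  have hR6 : ∀ (j y : Fin M) (jv : ℕ), jv < 2*m →
      (∀ i : Fin M, ANmat M i j = ancol M jv (i:ℕ)) → ¬((y:ℕ) < M/2) →
      emd (fun i => ANmat M i j) (fun i => STmat M i y) = C6 jv := by
    intro j y jv hjv hmatch hy
    rw [emd_eq_range _ _ (ancol M jv) (stcolR M) hmatch (st_matchR y hy)]
    have hjvM : jv < M := by omega
    rcases Nat.lt_or_ge jv m with hcm | hcm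
    · have hf1 : ∀ n, 0 ≤ n → n < jv →
          |(∑ t ∈ range (n+1), ancol M jv t) - (∑ t ∈ range (n+1), stcolR M t)|
            = 0*(n:ℝ)^2 + 0*(n:ℝ) + 0 := by
        intro n _ hn
        rw [pre_an M jv (n+1) hjvM, pre_R, hM2, if_neg (show ¬(jv < n+1) by omega),
          if_neg (show ¬(M-1-jv < n+1) by omega), if_pos (show n+1 ≤ 2*m by omega)]
        refine abs_eq_poly (by norm_num) (Or.inl (by norm_num))
      have hf2 : ∀ n, jv ≤ n → n < 2*m →
          |(∑ t ∈ range (n+1), ancol M jv t) - (∑ t ∈ range (n+1), stcolR M t)|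
            = 0*(n:ℝ)^2 + 0*(n:ℝ) + 1/2 := by
        intro n hn1 hn2
        rw [pre_an M jv (n+1) hjvM, pre_R, hM2, if_pos (show jv < n+1 by omega),
          if_neg (show ¬(M-1-jv < n+1) by omega), if_pos (show n+1 ≤ 2*m by omega)]
        refine abs_eq_poly (by norm_num) (Or.inl (by norm_num))
      have hf3 : ∀ n, 2*m ≤ n → n < 3*m →
          |(∑ t ∈ range (n+1), ancol M jv t) - (∑ t ∈ range (n+1), stcolR M t)|
            = 0*(n:ℝ)^2 + (-(1/(2*(m:ℝ))))*(n:ℝ) + (3/2 - 1/(2*(m:ℝ))) := by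
        intro n hn1 hn2
        rw [pre_an M jv (n+1) hjvM, pre_R, hM2, if_pos (show jv < n+1 by omega),
          if_neg (show ¬(M-1-jv < n+1) by omega), if_neg (show ¬(n+1 ≤ 2*m) by omega)]
        refine abs_eq_poly ?_ (Or.inl (by push_cast; rw [hMR]; field_simp <;> ring))
        have hb : (n:ℝ)+1 ≤ 3*(m:ℝ) := by exact_mod_cast (show n+1 ≤ 3*m by omega)
        have he : 0*(n:ℝ)^2 + (-(1/(2*(m:ℝ))))*(n:ℝ) + (3/2 - 1/(2*(m:ℝ)))
            = (3*(m:ℝ) - ((n:ℝ)+1))/(2*m) := by field_simp <;> ring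
        rw [he]; exact div_nonneg (by linarith) (by positivity)
      have hf4 : ∀ n, 3*m ≤ n → n < M-1-jv →
          |(∑ t ∈ range (n+1), ancol M jv t) - (∑ t ∈ range (n+1), stcolR M t)|
            = 0*(n:ℝ)^2 + (1/(2*(m:ℝ)))*(n:ℝ) + (1/(2*(m:ℝ)) - 3/2) := by
        intro n hn1 hn2
        rw [pre_an M jv (n+1) hjvM, pre_R, hM2, if_pos (show jv < n+1 by omega),
          if_neg (show ¬(M-1-jv < n+1) by omega), if_neg (show ¬(n+1 ≤ 2*m) by omega)]
        refine abs_eq_poly ?_ (Or.inr (by push_cast; rw [hMR]; field_simp <;> ring))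
        have hb : 3*(m:ℝ) ≤ (n:ℝ) := by exact_mod_cast hn1
        have he : 0*(n:ℝ)^2 + (1/(2*(m:ℝ)))*(n:ℝ) + (1/(2*(m:ℝ)) - 3/2)
            = (((n:ℝ)+1) - 3*(m:ℝ))/(2*m) := by field_simp <;> ring
        rw [he]; exact div_nonneg (by linarith) (by positivity)
      have hf5 : ∀ n, M-1-jv ≤ n → n < M →
          |(∑ t ∈ range (n+1), ancol M jv t) - (∑ t ∈ range (n+1), stcolR M t)|
            = 0*(n:ℝ)^2 + (-(1/(2*(m:ℝ))))*(n:ℝ) + (2 - 1/(2*(m:ℝ))) := by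
        intro n hn1 hn2
        rw [pre_an M jv (n+1) hjvM, pre_R, hM2, if_pos (show jv < n+1 by omega),
          if_pos (show M-1-jv < n+1 by omega), if_neg (show ¬(n+1 ≤ 2*m) by omega)]
        refine abs_eq_poly ?_ (Or.inl (by push_cast; rw [hMR]; field_simp <;> ring))
        have hb : (n:ℝ)+1 ≤ 4*(m:ℝ) := by exact_mod_cast (show n+1 ≤ 4*m by omega)
        have he : 0*(n:ℝ)^2 + (-(1/(2*(m:ℝ))))*(n:ℝ) + (2 - 1/(2*(m:ℝ)))
            = (4*(m:ℝ) - ((n:ℝ)+1))/(2*m) := by field_simp <;> ring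
        rw [he]; exact div_nonneg (by linarith) (by positivity)
      rw [range_split5 jv (2*m) (3*m) (M-1-jv) M (by omega) (by omega) (by omega) (by omega),
        sum_piece 0 jv (by omega) _ 0 0 0 hf1,
        sum_piece jv (2*m) (by omega) _ 0 0 (1/2) hf2,
        sum_piece (2*m) (3*m) (by omega) _ 0 (-(1/(2*(m:ℝ)))) (3/2 - 1/(2*(m:ℝ))) hf3,
        sum_piece (3*m) (M-1-jv) (by omega) _ 0 (1/(2*(m:ℝ))) (1/(2*(m:ℝ)) - 3/2) hf4,
        sum_piece (M-1-jv) M (by omega) _ 0 (-(1/(2*(m:ℝ)))) (2 - 1/(2*(m:ℝ))) hf5]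
      simp only [hC6]
      rw [if_pos hcm, castc jv hjvM, hMR]
      push_cast
      field_simp <;> ring
    · have hf1 : ∀ n, 0 ≤ n → n < jv →
          |(∑ t ∈ range (n+1), ancol M jv t) - (∑ t ∈ range (n+1), stcolR M t)|
            = 0*(n:ℝ)^2 + 0*(n:ℝ) + 0 := by
        intro n _ hn
        rw [pre_an M jv (n+1) hjvM, pre_R, hM2, if_neg (show ¬(jv < n+1) by omega),
          if_neg (show ¬(M-1-jv < n+1) by omega), if_pos (show n+1 ≤ 2*m by omega)]
        refine abs_eq_poly (by norm_num) (Or.inl (by norm_num))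
      have hf2 : ∀ n, jv ≤ n → n < 2*m →
          |(∑ t ∈ range (n+1), ancol M jv t) - (∑ t ∈ range (n+1), stcolR M t)|
            = 0*(n:ℝ)^2 + 0*(n:ℝ) + 1/2 := by
        intro n hn1 hn2
        rw [pre_an M jv (n+1) hjvM, pre_R, hM2, if_pos (show jv < n+1 by omega),
          if_neg (show ¬(M-1-jv < n+1) by omega), if_pos (show n+1 ≤ 2*m by omega)]
        refine abs_eq_poly (by norm_num) (Or.inl (by norm_num))
      have hf3 : ∀ n, 2*m ≤ n → n < M-1-jv →
          |(∑ t ∈ range (n+1), ancol M jv t) - (∑ t ∈ range (n+1), stcolR M t)|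
            = 0*(n:ℝ)^2 + (-(1/(2*(m:ℝ))))*(n:ℝ) + (3/2 - 1/(2*(m:ℝ))) := by
        intro n hn1 hn2
        rw [pre_an M jv (n+1) hjvM, pre_R, hM2, if_pos (show jv < n+1 by omega),
          if_neg (show ¬(M-1-jv < n+1) by omega), if_neg (show ¬(n+1 ≤ 2*m) by omega)]
        refine abs_eq_poly ?_ (Or.inl (by push_cast; rw [hMR]; field_simp <;> ring))
        have hb : (n:ℝ)+1 ≤ 3*(m:ℝ) := by exact_mod_cast (show n+1 ≤ 3*m by omega)
        have he : 0*(n:ℝ)^2 + (-(1/(2*(m:ℝ))))*(n:ℝ) + (3/2 - 1/(2*(m:ℝ)))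
            = (3*(m:ℝ) - ((n:ℝ)+1))/(2*m) := by field_simp <;> ring
        rw [he]; exact div_nonneg (by linarith) (by positivity)
      have hf5 : ∀ n, M-1-jv ≤ n → n < M →
          |(∑ t ∈ range (n+1), ancol M jv t) - (∑ t ∈ range (n+1), stcolR M t)|
            = 0*(n:ℝ)^2 + (-(1/(2*(m:ℝ))))*(n:ℝ) + (2 - 1/(2*(m:ℝ))) := by
        intro n hn1 hn2
        rw [pre_an M jv (n+1) hjvM, pre_R, hM2, if_pos (show jv < n+1 by omega),
          if_pos (show M-1-jv < n+1 by omega), if_neg (show ¬(n+1 ≤ 2*m) by omega)]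
        refine abs_eq_poly ?_ (Or.inl (by push_cast; rw [hMR]; field_simp <;> ring))
        have hb : (n:ℝ)+1 ≤ 4*(m:ℝ) := by exact_mod_cast (show n+1 ≤ 4*m by omega)
        have he : 0*(n:ℝ)^2 + (-(1/(2*(m:ℝ))))*(n:ℝ) + (2 - 1/(2*(m:ℝ)))
            = (4*(m:ℝ) - ((n:ℝ)+1))/(2*m) := by field_simp <;> ring
        rw [he]; exact div_nonneg (by linarith) (by positivity)
      rw [range_split4 jv (2*m) (M-1-jv) M (by omega) (by omega) (by omega),
        sum_piece 0 jv (by omega) _ 0 0 0 hf1,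
        sum_piece jv (2*m) (by omega) _ 0 0 (1/2) hf2,
        sum_piece (2*m) (M-1-jv) (by omega) _ 0 (-(1/(2*(m:ℝ)))) (3/2 - 1/(2*(m:ℝ))) hf3,
        sum_piece (M-1-jv) M (by omega) _ 0 (-(1/(2*(m:ℝ)))) (2 - 1/(2*(m:ℝ))) hf5]
      simp only [hC6]
      rw [if_neg (by omega), castc jv hjvM, hMR]
      push_cast
      field_simp <;> ring
  -- every column of ST gives the same cost
  have hcol : ∀ (j y : Fin M),
      emd (fun i => ANmat M i j) (fun i => STmat M i y)
        = C6 (if (j:ℕ) < 2*m then (j:ℕ) else M-1-(j:ℕ)) := by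
    intro j y
    by_cases hc : (j:ℕ) < 2*m
    · rw [if_pos hc]
      by_cases hs : (y:ℕ) < M/2
      · exact hL6 j y (j:ℕ) hc (an_match j) hs
      · exact hR6 j y (j:ℕ) hc (an_match j) hs
    · rw [if_neg hc]
      have hmatch : ∀ i : Fin M, ANmat M i j = ancol M (M-1-(j:ℕ)) (i:ℕ) := by
        intro i
        rw [an_match j i, ancol_symm M (j:ℕ) j.isLt]
      have hjv : M-1-(j:ℕ) < 2*m := by have := j.isLt; omega
      by_cases hs : (y:ℕ) < M/2
      · exact hL6 j y (M-1-(j:ℕ)) hjv hmatch hs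
      · exact hR6 j y (M-1-(j:ℕ)) hjv hmatch hs
  apply POS_eq_of_const
  intro σ
  rw [Finset.sum_congr rfl (fun j _ => hcol j (σ j)),
    Fin.sum_univ_eq_sum_range (fun jv => C6 (if jv < 2*m then jv else M-1-jv)) M]
  have hg1 : ∀ jv, 0 ≤ jv → jv < m →
      C6 (if jv < 2*m then jv else M-1-jv)
        = (1/(2*(m:ℝ)))*(jv:ℝ)^2 + ((2-4*(m:ℝ))/(4*(m:ℝ)))*(jv:ℝ) + (3*(m:ℝ)-1)/2 := by
    intro jv _ hv
    rw [if_pos (by omega)]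
    simp only [hC6]
    rw [if_pos hv]
    field_simp <;> ring
  have hg2 : ∀ jv, m ≤ jv → jv < 2*m →
      C6 (if jv < 2*m then jv else M-1-jv)
        = 0*(jv:ℝ)^2 + 0*(jv:ℝ) + (m:ℝ) := by
    intro jv hv1 hv2
    rw [if_pos (by omega)]
    simp only [hC6]
    rw [if_neg (by omega)]
    ring
  have hg3 : ∀ jv, 2*m ≤ jv → jv < 3*m →
      C6 (if jv < 2*m then jv else M-1-jv)
        = 0*(jv:ℝ)^2 + 0*(jv:ℝ) + (m:ℝ) := by
    intro jv hv1 hv2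
    rw [if_neg (by omega)]
    simp only [hC6]
    rw [if_neg (by omega)]
    ring
  have hg4 : ∀ jv, 3*m ≤ jv → jv < M →
      C6 (if jv < 2*m then jv else M-1-jv)
        = (1/(2*(m:ℝ)))*(jv:ℝ)^2 + ((2-12*(m:ℝ))/(4*(m:ℝ)))*(jv:ℝ) + (11*(m:ℝ)-3)/2 := by
    intro jv hv1 hv2
    rw [if_neg (by omega)]
    simp only [hC6]
    rw [if_pos (by omega), castc jv (by omega)]
    field_simp <;> ring
  rw [range_split4 m (2*m) (3*m) M (by omega) (by omega) (by omega),
    sum_piece 0 m (by omega) _ (1/(2*(m:ℝ))) ((2-4*(m:ℝ))/(4*(m:ℝ))) ((3*(m:ℝ)-1)/2) hg1,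
    sum_piece m (2*m) (by omega) _ 0 0 (m:ℝ) hg2,
    sum_piece (2*m) (3*m) (by omega) _ 0 0 (m:ℝ) hg3,
    sum_piece (3*m) M (by omega) _ (1/(2*(m:ℝ))) ((2-12*(m:ℝ))/(4*(m:ℝ))) ((11*(m:ℝ)-3)/2) hg4,
    hMR]
  push_cast
  field_simp <;> ring
lemma tendsto_POS_ratio (g : ℕ → ℝ) (A B : ℝ)
    (hval : ∀ m : ℕ, 1 ≤ m → g m = A*(m:ℝ)^2 + B) (c : ℝ) (hc : c = (3*A)/16) :
    Filter.Tendsto (fun m : ℕ => g m / D (4*m)) Filter.atTop (nhds c) := by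
  have h := tendsto_quad_ratio (3*A) (3*B) 16 (-1) (by norm_num)
  have hAc : (3*A)/16 = c := hc.symm
  rw [hAc] at h
  refine h.congr' ?_
  filter_upwards [Filter.eventually_atTop.mpr ⟨1, fun n hn => hn⟩] with n hn
  have h1 : (0:ℝ) < 16*(n:ℝ)^2 - 1 := by
    have : (1:ℝ) ≤ (n:ℝ) := by exact_mod_cast hn
    nlinarith
  rw [hval n hn]
  unfold D
  push_cast
  rw [div_eq_div_iff (by nlinarith) (by nlinarith)]
  ring

theorem compass_normalized_limits :
    (∀ m : ℕ, 1 ≤ m → POS (IDmat (4 * m)) (UNmat (4 * m)) / D (4 * m) = 1) ∧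
    Filter.Tendsto (fun m : ℕ => POS (IDmat (4 * m)) (ANmat (4 * m)) / D (4 * m))
      Filter.atTop (nhds (3 / 4)) ∧
    Filter.Tendsto (fun m : ℕ => POS (UNmat (4 * m)) (STmat (4 * m)) / D (4 * m))
      Filter.atTop (nhds (3 / 4)) ∧
    Filter.Tendsto (fun m : ℕ => POS (IDmat (4 * m)) (STmat (4 * m)) / D (4 * m))
      Filter.atTop (nhds (1 / 2)) ∧
    Filter.Tendsto (fun m : ℕ => POS (UNmat (4 * m)) (ANmat (4 * m)) / D (4 * m))
      Filter.atTop (nhds (1 / 2)) ∧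
    Filter.Tendsto (fun m : ℕ => POS (ANmat (4 * m)) (STmat (4 * m)) / D (4 * m))
      Filter.atTop (nhds (13 / 16)) := by
  refine ⟨?_, ?_, ?_, ?_, ?_, ?_⟩
  · intro m hm
    have hm1 : (1:ℝ) ≤ (m:ℝ) := by exact_mod_cast hm
    have hD : D (4*m) = (16*(m:ℝ)^2-1)/3 := by unfold D; push_cast; ring
    rw [V1 m hm, hD, div_self (ne_of_gt (by nlinarith))]
  · exact tendsto_POS_ratio _ 4 0 (fun n hn => by rw [V2 n hn]; ring) _ (by norm_num)
  · exact tendsto_POS_ratio _ 4 0 (fun n hn => by rw [V3 n hn]; ring) _ (by norm_num)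
  · exact tendsto_POS_ratio _ (8/3) (-2/3) (fun n hn => by rw [V4 n hn]; ring) _ (by norm_num)
  · exact tendsto_POS_ratio _ (8/3) (-2/3) (fun n hn => by rw [V5 n hn]; ring) _ (by norm_num)
  · exact tendsto_POS_ratio _ (13/3) (-1/3) (fun n hn => by rw [V6 n hn]; ring) _ (by norm_num)
end

section
/- Let X and Y be m×m bistochastic matrices with column vectors x_1,…,x_m and y_1,…,y_m, and let α ∈ [0,1]. Then POS(X, αX + (1−α)Y) ≤ (1−α)·Σ_{i=1}^m emd(x_i, y_i) and POS(αX + (1−α)Y, Y) ≤ α·Σ_{i=1}^m emd(x_i, y_i). -/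
open Finset

theorem pos_convex_upper_bounds {m : ℕ} (X Y : Matrix (Fin m) (Fin m) ℝ)
    (hX : Bistochastic X) (hY : Bistochastic Y)
    (α : ℝ) (hα : α ∈ Set.Icc (0 : ℝ) 1) :
    POS X (α • X + (1 - α) • Y) ≤ (1 - α) * ∑ j : Fin m, emd (fun i => X i j) (fun i => Y i j) ∧
    POS (α • X + (1 - α) • Y) Y ≤ α * ∑ j : Fin m, emd (fun i => X i j) (fun i => Y i j) := by
  obtain ⟨hα0, hα1⟩ := hα
  constructor
  · calc POS X (α • X + (1 - α) • Y) ≤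
        ∑ j : Fin m, emd (fun i => X i j) (fun i => (α • X + (1 - α) • Y) i ((1 : Equiv.Perm (Fin m)) j)) :=
          Finset.inf'_le _ (Finset.mem_univ _)
      _ = (1 - α) * ∑ j : Fin m, emd (fun i => X i j) (fun i => Y i j) := by
          rw [Finset.mul_sum]
          refine Finset.sum_congr rfl fun j _ => ?_
          simp only [emd, Equiv.Perm.one_apply, Matrix.add_apply, Matrix.smul_apply,
            smul_eq_mul, Finset.mul_sum]
          refine Finset.sum_congr rfl fun k _ => ?_
          rw [Finset.sum_add_distrib]
          have h1 : ∑ i ∈ Finset.Iic k, X i j - (∑ i ∈ Finset.Iic k, α * X i j + ∑ i ∈ Finset.Iic k, (1 - α) * Y i j)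
              = (1 - α) * (∑ i ∈ Finset.Iic k, X i j - ∑ i ∈ Finset.Iic k, Y i j) := by
            rw [← Finset.mul_sum, ← Finset.mul_sum]; ring
          rw [h1, abs_mul, abs_of_nonneg (by linarith)]
  · calc POS (α • X + (1 - α) • Y) Y ≤
        ∑ j : Fin m, emd (fun i => (α • X + (1 - α) • Y) i j) (fun i => Y i ((1 : Equiv.Perm (Fin m)) j)) :=
          Finset.inf'_le _ (Finset.mem_univ _)
      _ = α * ∑ j : Fin m, emd (fun i => X i j) (fun i => Y i j) := by
          rw [Finset.mul_sum]
          refine Finset.sum_congr rfl fun j _ => ?_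
          simp only [emd, Equiv.Perm.one_apply, Matrix.add_apply, Matrix.smul_apply,
            smul_eq_mul, Finset.mul_sum]
          refine Finset.sum_congr rfl fun k _ => ?_
          rw [Finset.sum_add_distrib]
          have h1 : ∑ i ∈ Finset.Iic k, α * X i j + ∑ i ∈ Finset.Iic k, (1 - α) * Y i j - ∑ i ∈ Finset.Iic k, Y i j
              = α * (∑ i ∈ Finset.Iic k, X i j - ∑ i ∈ Finset.Iic k, Y i j) := by
            rw [← Finset.mul_sum, ← Finset.mul_sum]; ring
          rw [h1, abs_mul, abs_of_nonneg hα0]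
end

section
/- Let X be an m×m matrix with nonnegative real entries such that every row of X and every column of X sums to the same value n' > 0. Then there exists a permutation σ of {1,…,m} such that x_{i,σ(i)} > 0 for every i ∈ {1,…,m}. -/
open Finset

theorem exists_positive_transversal {m : ℕ} (X : Matrix (Fin m) (Fin m) ℝ) (n' : ℝ)
    (hpos : 0 < n') (hnn : ∀ i j, 0 ≤ X i j)
    (hrow : ∀ i, ∑ j, X i j = n') (hcol : ∀ j, ∑ i, X i j = n') :
    ∃ σ : Equiv.Perm (Fin m), ∀ i, 0 < X i (σ i) := by
  classical
  set t : Fin m → Finset (Fin m) := fun i => univ.filter (fun j => 0 < X i j) with ht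
  have hall : ∀ s : Finset (Fin m), s.card ≤ (s.biUnion t).card := by
    intro s
    have key : (s.card : ℝ) * n' ≤ ((s.biUnion t).card : ℝ) * n' := by
      calc (s.card : ℝ) * n' = ∑ i ∈ s, ∑ j, X i j := by
            simp [hrow, mul_comm]
        _ = ∑ i ∈ s, ∑ j ∈ t i, X i j := by
            refine Finset.sum_congr rfl fun i _ => ?_
            refine (Finset.sum_subset (Finset.subset_univ _) fun j _ hj => ?_).symm
            simp only [ht, mem_filter, mem_univ, true_and] at hj
            exact le_antisymm (not_lt.mp hj) (hnn i j)
        _ ≤ ∑ i ∈ s, ∑ j ∈ s.biUnion t, X i j := by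
            refine Finset.sum_le_sum fun i hi => ?_
            exact Finset.sum_le_sum_of_subset_of_nonneg
              (Finset.subset_biUnion_of_mem t hi) (fun j _ _ => hnn i j)
        _ = ∑ j ∈ s.biUnion t, ∑ i ∈ s, X i j := Finset.sum_comm
        _ ≤ ∑ j ∈ s.biUnion t, ∑ i, X i j := by
            refine Finset.sum_le_sum fun j _ => ?_
            exact Finset.sum_le_sum_of_subset_of_nonneg
              (Finset.subset_univ _) (fun i _ _ => hnn i j)
        _ = ((s.biUnion t).card : ℝ) * n' := by simp [hcol, mul_comm]
    exact_mod_cast le_of_mul_le_mul_right key hpos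
  obtain ⟨f, hinj, hf⟩ := (Finset.all_card_le_biUnion_card_iff_existsInjective' t).mp hall
  refine ⟨Equiv.ofBijective f ((Fintype.bijective_iff_injective_and_card f).mpr ⟨hinj, rfl⟩), fun i => ?_⟩
  have := hf i
  simpa [ht] using this
end
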